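/- arXiv:1512.04767 — 5 statements merged into one kernel-verified Lean document; each statement's English description precedes it below -/
import Mathlib

section
/- Let λ be an infinite cardinal, let (T, Ī) be a λ⁺-complete tagged tree, and suppose lim(T) = ⋃_{α<λ} B_α where each B_α is a Borel subset of lim(T) in the natural topology. Then there are an ordinal α < λ and an ω-tree T† ⊆ T such that (T, Ī) ≤* (T†, Ī) and lim(T†) ⊆ B_α. -/
open Cardinal Set

noncomputable section

/-- Finite sequences of ordinals. -/
abbrev OSeq : Type 1 := List Ordinal

/-- ω-sequences of ordinals (potential branches). -/
abbrev OBranch : Type 1 := ℕ → Ordinal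

/-- The initial segment of length `n` of a branch. -/
def binit (b : OBranch) (n : ℕ) : OSeq := List.ofFn fun i : Fin n => b i

/-- The set of branches of a tree `T`. -/
def limT (T : Set OSeq) : Set OBranch := {b | ∀ n, binit b n ∈ T}

/-- The set of immediate successors in `T` of a node `η`. -/
def succs (T : Set OSeq) (η : OSeq) : Set OSeq :=
  {ν | ν ∈ T ∧ ∃ α : Ordinal, ν = η ++ [α]}

/-- `T` is an ω-tree: nonempty, closed under initial segments, and every
node has an immediate successor. -/
def IsOmegaTree (T : Set OSeq) : Prop :=
  T.Nonempty ∧ (∀ ⦃η ν : OSeq⦄, η ∈ T → ν <+: η → ν ∈ T) ∧ ∀ η ∈ T, (succs T η).Nonempty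

/-- `I` is an ideal on the set `S`. -/
def IsIdealOn {α : Type 1} (S : Set α) (I : Set (Set α)) : Prop :=
  (∀ x ∈ S, ({x} : Set α) ∈ I) ∧ (∀ A ∈ I, A ⊆ S) ∧
  (∀ A ∈ I, ∀ B ⊆ A, B ∈ I) ∧ (∀ A ∈ I, ∀ B ∈ I, A ∪ B ∈ I) ∧ S ∉ I

/-- The ideal `I` is `lam`-complete: any union of fewer than `lam` members of `I`
belongs to `I`. -/
def IdealComplete {α : Type 1} (lam : Cardinal.{0}) (I : Set (Set α)) : Prop :=
  ∀ F : Set (Set α), F ⊆ I → #↥F < Cardinal.lift.{1, 0} lam → ⋃₀ F ∈ I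

/-- `(T, D, I)` is a tagged tree: `T` is an ω-tree and to each node `η ∈ T` one
assigns an ideal `I η` on the set `D η`, with `succs T η ⊆ D η`. -/
def IsTaggedTree (T : Set OSeq) (D : OSeq → Set OSeq) (I : OSeq → Set (Set OSeq)) : Prop :=
  IsOmegaTree T ∧ ∀ η ∈ T, IsIdealOn (D η) (I η) ∧ succs T η ⊆ D η

/-- The set of splitting points of a tagged tree. -/
def splitPts (T : Set OSeq) (I : OSeq → Set (Set OSeq)) : Set OSeq :=
  {η | η ∈ T ∧ succs T η ∉ I η}

/-- `(T₁, I) ≤* (T₂, I)` for a subtree `T₂ ⊆ T₁` carrying the restriction of the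
same ideal assignment. -/
def leStar (I : OSeq → Set (Set OSeq)) (T₁ T₂ : Set OSeq) : Prop :=
  T₂ ⊆ T₁ ∧ splitPts T₂ I ⊆ splitPts T₁ I ∧ splitPts T₂ I = splitPts T₁ I ∩ T₂

/-- The basic cone determined by a finite sequence. -/
def cone (η : OSeq) : Set OBranch := {b | binit b η.length = η}

/-- The natural topology on `lim(T)`. -/
def limTop (T : Set OSeq) : TopologicalSpace ↥(limT T) :=
  TopologicalSpace.generateFrom
    {U | ∃ η ∈ T, U = (fun b : ↥(limT T) => (b : OBranch)) ⁻¹' cone η}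

/-- The Borel σ-algebra of the natural topology on `lim(T)`. -/
def limBorel (T : Set OSeq) : MeasurableSpace ↥(limT T) :=
  @borel _ (limTop T)


open Topology MeasureTheory

theorem binit_length (b : OBranch) (n : ℕ) : (binit b n).length = n := by
  simp [binit]

theorem binit_succ (b : OBranch) (n : ℕ) : binit b (n+1) = binit b n ++ [b n] := by
  apply List.ext_getElem
  · simp [binit]
  · intro i h1 h2
    simp only [binit, List.getElem_ofFn]
    rcases Nat.lt_or_ge i n with hi | hi
    · rw [List.getElem_append_left (by simpa [binit] using hi)]
      simp [binit]
    · have : i = n := by simp [binit] at h1; omega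
      subst this
      rw [List.getElem_append_right (by simp [binit])]
      simp [binit]

theorem binit_take (b : OBranch) {m n : ℕ} (h : m ≤ n) :
    (binit b n).take m = binit b m := by
  apply List.ext_getElem
  · simp [binit, h]
  · intro i h1 h2
    simp [binit]

theorem binit_agree {b b' : OBranch} {m n : ℕ} (h : m ≤ n)
    (hb : binit b n = binit b' n) : binit b m = binit b' m := by
  rw [← binit_take b h, ← binit_take b' h, hb]

def ntake (y : ℕ → ℕ) (n : ℕ) : List ℕ := List.ofFn fun i : Fin n => y i

theorem ntake_length (y : ℕ → ℕ) (n : ℕ) : (ntake y n).length = n := by simp [ntake]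

theorem ntake_succ (y : ℕ → ℕ) (n : ℕ) : ntake y (n+1) = ntake y n ++ [y n] := by
  apply List.ext_getElem
  · simp [ntake]
  · intro i h1 h2
    simp only [ntake, List.getElem_ofFn]
    rcases Nat.lt_or_ge i n with hi | hi
    · rw [List.getElem_append_left (by simpa [ntake] using hi)]
      simp [ntake]
    · have : i = n := by simp [ntake] at h1; omega
      subst this
      rw [List.getElem_append_right (by simp [ntake])]
      simp [ntake]

theorem ntake_take (y : ℕ → ℕ) {m n : ℕ} (h : m ≤ n) :
    (ntake y n).take m = ntake y m := by
  apply List.ext_getElem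
  · simp [ntake, h]
  · intro i h1 h2
    simp [ntake]

theorem prefix_snoc {u l : List Ordinal} {a : Ordinal} (h : u <+: l ++ [a]) :
    u <+: l ∨ u = l ++ [a] := by
  rcases h with ⟨t, ht⟩
  rcases t.eq_nil_or_concat with rfl | ⟨t', b, rfl⟩
  · right; simpa using ht
  · left
    rw [List.concat_eq_append, ← List.append_assoc] at ht
    exact ⟨t', List.append_inj_left' ht rfl⟩

theorem ntake_cons (y : ℕ → ℕ) (m : ℕ) :
    ntake y (m+1) = y 0 :: ntake (fun k => y (k+1)) m := by
  simp [ntake, List.ofFn_succ]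

theorem ntake_getD {y : ℕ → ℕ} {t m : ℕ} (h : t < m) : (ntake y m).getD t 0 = y t := by
  rw [List.getD_eq_getElem?_getD, List.getElem?_eq_getElem (by simpa [ntake] using h)]
  simp [ntake]

theorem nat_pair_le {i j k : ℕ} (h : j ≤ k) : Nat.pair i j ≤ Nat.pair i k := by
  rcases Nat.lt_or_ge j k with h' | h'
  · exact le_of_lt (Nat.pair_lt_pair_right _ h')
  · have : j = k := le_antisymm h h'
    subst this; rfl



section Suslin
variable (T : Set OSeq)

def IsClp (C : Set ↥(limT T)) : Prop :=
  ∀ x : ↥(limT T), x ∉ C → ∃ n : ℕ, ∀ x' : ↥(limT T),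
    binit ↑x' n = binit ↑x n → x' ∉ C

def Suslin (S : Set ↥(limT T)) : Prop :=
  ∃ G : List ℕ → Set ↥(limT T), (∀ s, IsClp T (G s)) ∧
    ∀ x, x ∈ S ↔ ∃ y : ℕ → ℕ, ∀ n, x ∈ G (ntake y n)

theorem open_char {U : Set ↥(limT T)} (hU : IsOpen[limTop T] U) :
    ∀ x ∈ U, ∃ n : ℕ, ∀ x' : ↥(limT T), binit ↑x' n = binit ↑x n → x' ∈ U := by
  induction hU with
  | basic V hV =>
      obtain ⟨η, hη, rfl⟩ := hV
      intro x hx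
      refine ⟨η.length, fun x' hx' => ?_⟩
      have : binit ↑x η.length = η := hx
      simp only [mem_preimage, cone, mem_setOf_eq] at *
      rw [hx']; exact hx
  | univ => intro x _; exact ⟨0, fun x' _ => trivial⟩
  | inter U V _ _ ihU ihV =>
      intro x hx
      obtain ⟨n1, h1⟩ := ihU x hx.1
      obtain ⟨n2, h2⟩ := ihV x hx.2
      refine ⟨max n1 n2, fun x' hx' => ?_⟩
      exact ⟨h1 x' (binit_agree (le_max_left _ _) hx'),
             h2 x' (binit_agree (le_max_right _ _) hx')⟩
  | sUnion S _ ih =>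
      intro x hx
      obtain ⟨V, hVS, hxV⟩ := hx
      obtain ⟨n, hn⟩ := ih V hVS x hxV
      exact ⟨n, fun x' hx' => ⟨V, hVS, hn x' hx'⟩⟩

theorem suslin_open {U : Set ↥(limT T)} (hU : IsOpen[limTop T] U) : Suslin T U := by
  classical
  set V : ℕ → Set ↥(limT T) :=
    fun n => {x | ∀ x' : ↥(limT T), binit ↑x' n = binit ↑x n → x' ∈ U} with hV
  refine ⟨fun s => match s with | [] => univ | n :: _ => V n, ?_, ?_⟩
  · intro s
    match s with
    | [] => intro x hx; exact absurd trivial hx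
    | n :: t =>
        intro x hx
        refine ⟨n, fun x' hx' hx'' => hx ?_⟩
        intro x'' hx'''
        exact hx'' x'' (hx'''.trans hx'.symm)
  · intro x
    constructor
    · intro hx
      obtain ⟨n, hn⟩ := open_char T hU x hx
      refine ⟨fun _ => n, fun m => ?_⟩
      match m with
      | 0 => trivial
      | m+1 =>
          have : ntake (fun _ => n) (m+1) = n :: ntake (fun _ => n) m := ntake_cons _ m
          rw [this]; exact hn
    · rintro ⟨y, hy⟩
      have h1 := hy 1
      have : ntake y 1 = [y 0] := by simp [ntake, List.ofFn_succ]
      rw [this] at h1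
      exact h1 x rfl

theorem suslin_compl_open {U : Set ↥(limT T)} (hU : IsOpen[limTop T] U) : Suslin T Uᶜ := by
  refine ⟨fun _ => Uᶜ, fun s x hx => ?_, fun x => ?_⟩
  · obtain ⟨n, hn⟩ := open_char T hU x (not_not.mp hx)
    exact ⟨n, fun x' hx' h => h (hn x' hx')⟩
  · exact ⟨fun h => ⟨fun _ => 0, fun _ => h⟩, fun ⟨y, hy⟩ => hy 0⟩

theorem suslin_empty : Suslin T ∅ := by
  refine ⟨fun _ => ∅, fun s x hx => ⟨0, fun x' _ h => h⟩, fun x => ?_⟩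
  simp only [mem_empty_iff_false, false_iff]
  rintro ⟨y, hy⟩; exact hy 0

theorem suslin_univ : Suslin T univ := by
  refine ⟨fun _ => univ, fun s x hx => absurd trivial hx, fun x => ?_⟩
  simp only [mem_univ, true_iff]
  exact ⟨fun _ => 0, fun _ => trivial⟩


end Suslin

theorem ntake_getElem (y : ℕ → ℕ) (n t : ℕ) (h : t < (ntake y n).length) :
    (ntake y n)[t] = y t := by simp [ntake]
section Suslin2
variable (T : Set OSeq)
theorem suslin_iUnion {f : ℕ → Set ↥(limT T)} (h : ∀ n, Suslin T (f n)) :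
    Suslin T (⋃ n, f n) := by
  classical
  choose G hGclp hGrep using h
  refine ⟨fun s => match s with | [] => univ | i :: t => G i t, ?_, ?_⟩
  · intro s
    match s with
    | [] => exact fun x hx => absurd trivial hx
    | i :: t => exact hGclp i t
  · intro x
    constructor
    · intro hx
      obtain ⟨i, hi⟩ := mem_iUnion.mp hx
      obtain ⟨y', hy'⟩ := (hGrep i x).mp hi
      refine ⟨fun k => match k with | 0 => i | k+1 => y' k, fun m => ?_⟩
      match m with
      | 0 => trivial
      | m+1 => rw [ntake_cons]; exact hy' m
    · rintro ⟨y, hy⟩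
      refine mem_iUnion.mpr ⟨y 0, (hGrep (y 0) x).mpr ⟨fun k => y (k+1), fun n => ?_⟩⟩
      have := hy (n+1)
      rwa [ntake_cons] at this

theorem suslin_iInter {f : ℕ → Set ↥(limT T)} (h : ∀ n, Suslin T (f n)) :
    Suslin T (⋂ n, f n) := by
  classical
  choose G hGclp hGrep using h
  set G' : List ℕ → Set ↥(limT T) := fun s =>
    {x | (∀ i < s.length, x ∈ G i []) ∧
      ∀ i k, Nat.pair i k < s.length →
        x ∈ G i (List.ofFn fun j : Fin (k+1) => s.getD (Nat.pair i (j : ℕ)) 0)} with hG'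
  refine ⟨G', ?_, ?_⟩
  · intro s x hx
    rw [hG'] at hx
    simp only [mem_setOf_eq, not_and_or] at hx
    rcases hx with hx | hx
    · push_neg at hx
      obtain ⟨i, hi, hxi⟩ := hx
      obtain ⟨n, hn⟩ := hGclp i [] x hxi
      refine ⟨n, fun x' hx' hmem => hn x' hx' ?_⟩
      exact hmem.1 i hi
    · push_neg at hx
      obtain ⟨i, k, hik, hxik⟩ := hx
      obtain ⟨n, hn⟩ := hGclp i _ x hxik
      refine ⟨n, fun x' hx' hmem => hn x' hx' ?_⟩
      exact hmem.2 i k hik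
  · intro x
    constructor
    · intro hx
      have hx' : ∀ i, ∃ y : ℕ → ℕ, ∀ n, x ∈ G i (ntake y n) :=
        fun i => (hGrep i x).mp (mem_iInter.mp hx i)
      choose ys hys using hx'
      refine ⟨fun m => ys (Nat.unpair m).1 (Nat.unpair m).2, fun m => ?_⟩
      constructor
      · intro i _
        have := hys i 0
        simpa [ntake] using this
      · intro i k hik
        have hlist : (List.ofFn fun j : Fin (k+1) =>
            (ntake (fun m => ys (Nat.unpair m).1 (Nat.unpair m).2) m).getD
              (Nat.pair i (j : ℕ)) 0) = ntake (ys i) (k+1) := by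
          apply List.ext_getElem
          · simp [ntake]
          · intro t h1 h2
            rw [ntake_length] at hik
            rw [ntake_getElem]
            simp only [List.getElem_ofFn]
            have htk : t ≤ k := by simpa using Nat.lt_succ_iff.mp (by simpa using h1)
            have hlt : Nat.pair i t < m := lt_of_le_of_lt (nat_pair_le htk) hik
            rw [ntake_getD hlt]
            simp [Nat.unpair_pair]
        rw [hlist]
        exact hys i (k+1)
    · rintro ⟨y, hy⟩
      refine mem_iInter.mpr fun i => (hGrep i x).mpr ⟨fun k => y (Nat.pair i k), fun n => ?_⟩
      match n with
      | 0 =>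
          have := (hy (i+1)).1 i (by simp [ntake])
          simpa [ntake] using this
      | k+1 =>
          have h2 := (hy (Nat.pair i k + 1)).2 i k (by simp [ntake])
          have hlist : (List.ofFn fun j : Fin (k+1) =>
              (ntake y (Nat.pair i k + 1)).getD (Nat.pair i (j : ℕ)) 0)
              = ntake (fun k' => y (Nat.pair i k')) (k+1) := by
            apply List.ext_getElem
            · simp [ntake]
            · intro t h1 h2'
              rw [ntake_getElem]
              simp only [List.getElem_ofFn]
              have htk : t ≤ k := by simpa using Nat.lt_succ_iff.mp (by simpa using h1)
              have hlt : Nat.pair i t < Nat.pair i k + 1 :=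
                Nat.lt_succ_of_le (nat_pair_le htk)
              rw [ntake_getD hlt]
          rwa [hlist] at h2
end Suslin2

def chpos (p : OSeq × List ℕ) (ν : OSeq) (m : ℕ) : OSeq × List ℕ := (ν, p.2 ++ [m])
def Esc (T : Set OSeq) (G : List ℕ → Set ↥(limT T)) (p : OSeq × List ℕ) : Prop :=
  ∃ n ≤ p.2.length, ∀ x : ↥(limT T), binit ↑x p.1.length = p.1 → x ∉ G (p.2.take n)
def Wit (T : Set OSeq) (I : OSeq → Set (Set OSeq)) (G : List ℕ → Set ↥(limT T)) :
    Ordinal.{1} → Set (OSeq × List ℕ) := fun ξ =>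
  {p | Esc T G p ∨
    (p.1 ∈ splitPts T I ∧ ∀ P, P ⊆ succs T p.1 → P ∉ I p.1 → ∀ m : ℕ,
      ∃ ν ∈ P, ∃ ζ : ↥(Iio ξ), chpos p ν m ∈ Wit T I G ζ.1) ∨
    (p.1 ∉ splitPts T I ∧ ∀ ν ∈ succs T p.1, ∀ m : ℕ,
      ∃ ζ : ↥(Iio ξ), chpos p ν m ∈ Wit T I G ζ.1)}
termination_by ξ => ξ
decreasing_by exacts [ζ.2, ζ.2]
def WW (T : Set OSeq) (I : OSeq → Set (Set OSeq)) (G : List ℕ → Set ↥(limT T)) :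
    Set (OSeq × List ℕ) := {p | ∃ ξ : Ordinal.{1}, p ∈ Wit T I G ξ}
theorem wit_unfold (T I G) (ξ : Ordinal.{1}) (p : OSeq × List ℕ) :
    p ∈ Wit T I G ξ ↔ (Esc T G p ∨
    (p.1 ∈ splitPts T I ∧ ∀ P, P ⊆ succs T p.1 → P ∉ I p.1 → ∀ m : ℕ,
      ∃ ν ∈ P, ∃ ζ : ↥(Iio ξ), chpos p ν m ∈ Wit T I G ζ.1) ∨
    (p.1 ∉ splitPts T I ∧ ∀ ν ∈ succs T p.1, ∀ m : ℕ,
      ∃ ζ : ↥(Iio ξ), chpos p ν m ∈ Wit T I G ζ.1)) := by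
  rw [Wit]; rfl

section Game
variable (T : Set OSeq) (I : OSeq → Set (Set OSeq)) (G : List ℕ → Set ↥(limT T))

theorem esc_wit {p} (h : Esc T G p) (ξ : Ordinal.{1}) : p ∈ Wit T I G ξ :=
  (wit_unfold T I G ξ p).mpr (Or.inl h)

theorem notin_ww_notesc {p} (hp : p ∉ WW T I G) : ¬ Esc T G p :=
  fun h => hp ⟨0, esc_wit T I G h 0⟩

theorem notin_ww_split {p} (hp : p ∉ WW T I G) (hsp : p.1 ∈ splitPts T I) :
    ∃ P, P ⊆ succs T p.1 ∧ P ∉ I p.1 ∧ ∃ m : ℕ,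
      ∀ ν ∈ P, chpos p ν m ∉ WW T I G := by
  by_contra h
  push_neg at h
  have h' : ∀ P, P ⊆ succs T p.1 → P ∉ I p.1 → ∀ m : ℕ,
      ∃ ν, ν ∈ P ∧ chpos p ν m ∈ WW T I G := by
    intro P hP1 hP2 m
    obtain ⟨ν, hν, hw⟩ := h P hP1 hP2 m
    exact ⟨ν, hν, hw⟩
  -- collect ranks
  set R : ℕ → Set OSeq := fun m => {ν | ν ∈ succs T p.1 ∧ chpos p ν m ∈ WW T I G} with hR
  have hex : ∀ q : Σ m : ℕ, ↥(R m), ∃ ξ : Ordinal.{1}, chpos p q.2.1 q.1 ∈ Wit T I G ξ :=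
    fun q => q.2.2.2
  choose ξf hξf using hex
  set Ξ : Ordinal.{1} := Order.succ (⨆ q, ξf q) with hΞ
  apply hp
  refine ⟨Ξ, (wit_unfold T I G Ξ p).mpr (Or.inr (Or.inl ⟨hsp, ?_⟩))⟩
  intro P hP1 hP2 m
  obtain ⟨ν, hν, hw⟩ := h' P hP1 hP2 m
  have hνR : ν ∈ R m := ⟨hP1 hν, hw⟩
  refine ⟨ν, hν, ⟨ξf ⟨m, ⟨ν, hνR⟩⟩, ?_⟩, hξf ⟨m, ⟨ν, hνR⟩⟩⟩
  have : ξf ⟨m, ⟨ν, hνR⟩⟩ ≤ ⨆ q, ξf q := le_ciSup (Ordinal.bddAbove_range.{1,0} _) _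
  exact lt_of_le_of_lt this (Order.lt_succ _)

theorem notin_ww_nonsplit {p} (hp : p ∉ WW T I G) (hsp : p.1 ∉ splitPts T I) :
    ∃ ν ∈ succs T p.1, ∃ m : ℕ, chpos p ν m ∉ WW T I G := by
  by_contra h
  push_neg at h
  have hex : ∀ q : ↥(succs T p.1) × ℕ, ∃ ξ : Ordinal.{1},
      chpos p q.1.1 q.2 ∈ Wit T I G ξ := fun q => h q.1.1 q.1.2 q.2
  choose ξf hξf using hex
  set Ξ : Ordinal.{1} := Order.succ (⨆ q, ξf q) with hΞ
  apply hp
  refine ⟨Ξ, (wit_unfold T I G Ξ p).mpr (Or.inr (Or.inr ⟨hsp, ?_⟩))⟩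
  intro ν hν m
  refine ⟨⟨ξf ⟨⟨ν, hν⟩, m⟩, ?_⟩, hξf ⟨⟨ν, hν⟩, m⟩⟩
  exact lt_of_le_of_lt (le_ciSup (Ordinal.bddAbove_range.{1,0} _) _) (Order.lt_succ _)

/-- rank of a position in `WW`. -/
def rk (p : OSeq × List ℕ) : Ordinal.{1} := sInf {ξ | p ∈ Wit T I G ξ}

theorem wit_rk {p} (hp : p ∈ WW T I G) : p ∈ Wit T I G (rk T I G p) :=
  csInf_mem hp

theorem rk_le {p} {ξ} (h : p ∈ Wit T I G ξ) : rk T I G p ≤ ξ := csInf_le' h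

/-- the set of descending successors at a split position -/
def DescSet (p : OSeq × List ℕ) (m : ℕ) : Set OSeq :=
  {ν | ν ∈ succs T p.1 ∧ ∃ ζ : Ordinal.{1}, ζ < rk T I G p ∧ chpos p ν m ∈ Wit T I G ζ}

theorem descset_cosmall {p} (hp : p ∈ WW T I G) (hne : ¬ Esc T G p)
    (hsp : p.1 ∈ splitPts T I) (m : ℕ) :
    succs T p.1 \ DescSet T I G p m ∈ I p.1 := by
  have hw := wit_rk T I G hp
  rw [wit_unfold] at hw
  rcases hw with hw | hw | hw
  · exact absurd hw hne
  · by_contra hbig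
    obtain ⟨ν, hν, ⟨ζ, hζw⟩⟩ := hw.2 _ diff_subset hbig m
    exact hν.2 ⟨hν.1, ζ.1, ζ.2, hζw⟩
  · exact absurd hsp hw.1

theorem desc_nonsplit {p} (hp : p ∈ WW T I G) (hne : ¬ Esc T G p)
    (hsp : p.1 ∉ splitPts T I) {ν} (hν : ν ∈ succs T p.1) (m : ℕ) :
    ∃ ζ : Ordinal.{1}, ζ < rk T I G p ∧ chpos p ν m ∈ Wit T I G ζ := by
  have hw := wit_rk T I G hp
  rw [wit_unfold] at hw
  rcases hw with hw | hw | hw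
  · exact absurd hw hne
  · exact absurd hw.1 hsp
  · obtain ⟨ζ, hζ⟩ := hw.2 ν hν m
    exact ⟨ζ.1, ζ.2, hζ⟩
end Game

theorem suslin_of_measurable (T : Set OSeq) (S : Set ↥(limT T))
    (hS : MeasurableSet[limBorel T] S) : Suslin T S := by
  have h : MeasurableSet[MeasurableSpace.generateFrom
      {s : Set ↥(limT T) | IsOpen[limTop T] s}] S := hS
  have : Suslin T S ∧ Suslin T Sᶜ := by
    refine MeasurableSpace.generateFrom_induction
      {s : Set ↥(limT T) | IsOpen[limTop T] s}
      (fun s _ => Suslin T s ∧ Suslin T sᶜ) ?_ ?_ ?_ ?_ S h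
    · exact fun t ht _ => ⟨suslin_open T ht, suslin_compl_open T ht⟩
    · refine ⟨suslin_empty T, ?_⟩
      rw [compl_empty]; exact suslin_univ T
    · rintro t _ ⟨h1, h2⟩
      refine ⟨h2, ?_⟩
      rw [compl_compl]; exact h1
    · rintro f _ hf
      refine ⟨suslin_iUnion T (fun n => (hf n).1), ?_⟩
      rw [compl_iUnion]; exact suslin_iInter T (fun n => (hf n).2)
  exact this.1

section TreeBasics
variable {T : Set OSeq} {D : OSeq → Set OSeq} {I : OSeq → Set (Set OSeq)}

theorem nil_mem_tree (h : IsOmegaTree T) : [] ∈ T := by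
  obtain ⟨⟨η, hη⟩, hdc, _⟩ := h
  exact hdc hη (List.nil_prefix)

theorem empty_mem_ideal (htag : IsTaggedTree T D I) {η : OSeq} (hη : η ∈ T) :
    ∅ ∈ I η := by
  obtain ⟨x, hx⟩ := htag.1.2.2 η hη
  have hxD : x ∈ D η := (htag.2 η hη).2 hx
  have hsing : ({x} : Set OSeq) ∈ I η := (htag.2 η hη).1.1 x hxD
  exact (htag.2 η hη).1.2.2.1 _ hsing ∅ (empty_subset _)

theorem small_of_subset (htag : IsTaggedTree T D I) {η : OSeq} (hη : η ∈ T)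
    {A B₀ : Set OSeq} (hA : A ∈ I η) (hB : B₀ ⊆ A) : B₀ ∈ I η :=
  (htag.2 η hη).1.2.2.1 _ hA _ hB

theorem succs_mono {T' : Set OSeq} (hT' : T' ⊆ T) (η : OSeq) :
    succs T' η ⊆ succs T η := fun ν hν => ⟨hT' hν.1, hν.2⟩

end TreeBasics

section Iside
variable (T : Set OSeq) (I : OSeq → Set (Set OSeq)) (G : List ℕ → Set ↥(limT T))

open Classical in
def splitCh (p : OSeq × List ℕ) : Set OSeq × ℕ :=
  if h : ∃ Pm : Set OSeq × ℕ, Pm.1 ⊆ succs T p.1 ∧ Pm.1 ∉ I p.1 ∧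
      ∀ ν ∈ Pm.1, chpos p ν Pm.2 ∉ WW T I G then h.choose else (∅, 0)

theorem splitCh_spec {p} (hp : p ∉ WW T I G) (hsp : p.1 ∈ splitPts T I) :
    (splitCh T I G p).1 ⊆ succs T p.1 ∧ (splitCh T I G p).1 ∉ I p.1 ∧
      ∀ ν ∈ (splitCh T I G p).1, chpos p ν (splitCh T I G p).2 ∉ WW T I G := by
  obtain ⟨P, h1, h2, m, h3⟩ := notin_ww_split T I G hp hsp
  have hex : ∃ Pm : Set OSeq × ℕ, Pm.1 ⊆ succs T p.1 ∧ Pm.1 ∉ I p.1 ∧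
      ∀ ν ∈ Pm.1, chpos p ν Pm.2 ∉ WW T I G := ⟨(P, m), h1, h2, h3⟩
  rw [splitCh, dif_pos hex]
  exact hex.choose_spec

open Classical in
def nsCh (p : OSeq × List ℕ) : OSeq × ℕ :=
  if h : ∃ νm : OSeq × ℕ, νm.1 ∈ succs T p.1 ∧ chpos p νm.1 νm.2 ∉ WW T I G
  then h.choose else ([], 0)

theorem nsCh_spec {p} (hp : p ∉ WW T I G) (hsp : p.1 ∉ splitPts T I) :
    (nsCh T I G p).1 ∈ succs T p.1 ∧
      chpos p (nsCh T I G p).1 (nsCh T I G p).2 ∉ WW T I G := by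
  obtain ⟨ν, h1, m, h2⟩ := notin_ww_nonsplit T I G hp hsp
  have hex : ∃ νm : OSeq × ℕ, νm.1 ∈ succs T p.1 ∧ chpos p νm.1 νm.2 ∉ WW T I G :=
    ⟨(ν, m), h1, h2⟩
  rw [nsCh, dif_pos hex]
  exact hex.choose_spec

inductive Live : OSeq × List ℕ → Prop
  | root : Live ([], [])
  | stepS (p ν) (hL : Live p) (hsp : p.1 ∈ splitPts T I)
      (hν : ν ∈ (splitCh T I G p).1) : Live (ν, p.2 ++ [(splitCh T I G p).2])
  | stepN (p ν m) (hL : Live p) (hsp : p.1 ∉ splitPts T I)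
      (he : nsCh T I G p = (ν, m)) : Live (ν, p.2 ++ [m])

variable {D : OSeq → Set OSeq}

theorem live_basic (htag : IsTaggedTree T D I)
    (hroot : (([], []) : OSeq × List ℕ) ∉ WW T I G) :
    ∀ {p}, Live T I G p → p ∉ WW T I G ∧ p.1 ∈ T ∧ p.1.length = p.2.length := by
  intro p hL
  induction hL with
  | root => exact ⟨hroot, nil_mem_tree htag.1, rfl⟩
  | stepS p ν hL hsp hν ih =>
      have spec := splitCh_spec T I G ih.1 hsp
      refine ⟨spec.2.2 ν hν, (spec.1 hν).1, ?_⟩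
      obtain ⟨a, ha⟩ := (spec.1 hν).2
      simp [ha, ih.2.2]
  | stepN p ν m hL hsp he ih =>
      have spec := nsCh_spec T I G ih.1 hsp
      rw [he] at spec
      refine ⟨spec.2, spec.1.1, ?_⟩
      obtain ⟨a, ha⟩ := spec.1.2
      have ha' : ν = p.1 ++ [a] := ha
      simp [ha', ih.2.2]

end Iside

section Iside2
variable (T : Set OSeq) (I : OSeq → Set (Set OSeq)) (G : List ℕ → Set ↥(limT T))
variable {D : OSeq → Set OSeq}

theorem live_inv {η : OSeq} {s : List ℕ} (h : Live T I G (η, s)) :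
    (η = [] ∧ s = []) ∨
    (∃ p, Live T I G p ∧ p.1 ∈ splitPts T I ∧ η ∈ (splitCh T I G p).1 ∧
      s = p.2 ++ [(splitCh T I G p).2]) ∨
    (∃ p m, Live T I G p ∧ p.1 ∉ splitPts T I ∧ nsCh T I G p = (η, m) ∧
      s = p.2 ++ [m]) := by
  generalize hq : (η, s) = q at h
  cases h with
  | root =>
      left
      have h1 : η = [] := congrArg Prod.fst hq
      have h2 : s = [] := congrArg Prod.snd hq
      exact ⟨h1, h2⟩
  | stepS p ν hL hsp hν =>
      right; left
      have h1 : η = ν := congrArg Prod.fst hq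
      have h2 : s = p.2 ++ [(splitCh T I G p).2] := congrArg Prod.snd hq
      subst h1
      exact ⟨p, hL, hsp, hν, h2⟩
  | stepN p ν m hL hsp he =>
      right; right
      have h1 : η = ν := congrArg Prod.fst hq
      have h2 : s = p.2 ++ [m] := congrArg Prod.snd hq
      subst h1
      exact ⟨p, m, hL, hsp, he, h2⟩

/-- the node of the parent of a live non-root position is determined. -/
theorem live_parent (htag : IsTaggedTree T D I)
    (hroot : (([], []) : OSeq × List ℕ) ∉ WW T I G)
    {η₀ : OSeq} {a : Ordinal} {s : List ℕ} (h : Live T I G (η₀ ++ [a], s)) :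
    ∃ p, Live T I G p ∧ p.1 = η₀ ∧
      ((p.1 ∈ splitPts T I ∧ η₀ ++ [a] ∈ (splitCh T I G p).1 ∧
        s = p.2 ++ [(splitCh T I G p).2]) ∨
       (p.1 ∉ splitPts T I ∧ ∃ m, nsCh T I G p = (η₀ ++ [a], m) ∧
        s = p.2 ++ [m])) := by
  rcases live_inv T I G h with ⟨h1, _⟩ | ⟨p, hL, hsp, hν, hs⟩ | ⟨p, m, hL, hsp, he, hs⟩
  · exact absurd h1 (by simp)
  · have spec := splitCh_spec T I G (live_basic T I G htag hroot hL).1 hsp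
    obtain ⟨a1, ha1⟩ := (spec.1 hν).2
    have hp1 : p.1 = η₀ := List.append_inj_left' ha1.symm rfl
    exact ⟨p, hL, hp1, Or.inl ⟨hsp, hν, hs⟩⟩
  · have spec := nsCh_spec T I G (live_basic T I G htag hroot hL).1 hsp
    rw [he] at spec
    obtain ⟨a1, ha1⟩ := spec.1.2
    have ha1' : η₀ ++ [a] = p.1 ++ [a1] := ha1
    have hp1 : p.1 = η₀ := List.append_inj_left' ha1'.symm rfl
    exact ⟨p, hL, hp1, Or.inr ⟨hsp, m, he, hs⟩⟩

theorem live_nil (htag : IsTaggedTree T D I)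
    (hroot : (([], []) : OSeq × List ℕ) ∉ WW T I G) :
    ∀ s₀ : List ℕ, Live T I G ([], s₀) → s₀ = [] := by
  intro s₀ h
  rcases live_inv T I G h with ⟨_, h2⟩ | ⟨p, hL, hsp, hν, hs⟩ | ⟨p, m, hL, hsp, he, hs⟩
  · exact h2
  · have spec := splitCh_spec T I G (live_basic T I G htag hroot hL).1 hsp
    obtain ⟨a1, ha1⟩ := (spec.1 hν).2
    exact absurd ha1.symm (by simp)
  · have spec := nsCh_spec T I G (live_basic T I G htag hroot hL).1 hsp
    rw [he] at spec
    obtain ⟨a1, ha1⟩ := spec.1.2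
    have ha1' : ([] : OSeq) = p.1 ++ [a1] := ha1
    exact absurd ha1'.symm (by simp)

theorem live_unique (htag : IsTaggedTree T D I)
    (hroot : (([], []) : OSeq × List ℕ) ∉ WW T I G) :
    ∀ (n : ℕ) (η : OSeq) (s s' : List ℕ), η.length ≤ n →
      Live T I G (η, s) → Live T I G (η, s') → s = s' := by
  intro n
  induction n with
  | zero =>
      intro η s s' hlen h1 h2
      have hη : η = [] := List.length_eq_zero_iff.mp (Nat.le_zero.mp hlen)
      subst hη
      rw [live_nil T I G htag hroot s h1, live_nil T I G htag hroot s' h2]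
  | succ n ih =>
      intro η s s' hlen h1 h2
      rcases List.eq_nil_or_concat η with rfl | ⟨η₀, a, rfl⟩
      · rw [live_nil T I G htag hroot s h1, live_nil T I G htag hroot s' h2]
      · rw [List.concat_eq_append] at h1 h2 hlen
        have hlen₀ : η₀.length ≤ n := by simp at hlen; omega
        obtain ⟨p, hLp, hp1, hcase⟩ := live_parent T I G htag hroot h1
        obtain ⟨q, hLq, hq1, hcase'⟩ := live_parent T I G htag hroot h2
        have hs2 : p.2 = q.2 := by
          apply ih η₀ p.2 q.2 hlen₀
          · rw [← hp1]; exact (Prod.mk.eta (p := p)) ▸ hLp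
          · rw [← hq1]; exact (Prod.mk.eta (p := q)) ▸ hLq
        have hpq : p = q := Prod.ext (hp1.trans hq1.symm) hs2
        subst hpq
        rcases hcase with ⟨hsp, _, hs⟩ | ⟨hsp, m, he, hs⟩ <;>
          rcases hcase' with ⟨hsp', _, hs'⟩ | ⟨hsp', m', he', hs'⟩
        · rw [hs, hs']
        · exact absurd hsp hsp'
        · exact absurd hsp' hsp
        · rw [he] at he'
          have hm : m = m' := by
            have := congrArg Prod.snd he'
            exact this
          rw [hs, hs', hm]
end Iside2

section Iside3
variable (T : Set OSeq) (I : OSeq → Set (Set OSeq)) (G : List ℕ → Set ↥(limT T))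
variable {D : OSeq → Set OSeq}

def Tdag : Set OSeq := {η | ∃ s, Live T I G (η, s)}

theorem live_prefix (htag : IsTaggedTree T D I)
    (hroot : (([], []) : OSeq × List ℕ) ∉ WW T I G) :
    ∀ {p}, Live T I G p → ∀ u, u <+: p.1 → u ∈ Tdag T I G := by
  intro p hL
  induction hL with
  | root =>
      intro u hu
      have : u = [] := List.prefix_nil.mp hu
      exact ⟨[], this ▸ Live.root⟩
  | stepS p ν hL hsp hν ih =>
      intro u hu
      have spec := splitCh_spec T I G (live_basic T I G htag hroot hL).1 hsp
      obtain ⟨a, ha⟩ := (spec.1 hν).2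
      rw [ha] at hu
      rcases prefix_snoc hu with hu' | rfl
      · exact ih u hu'
      · exact ⟨p.2 ++ [(splitCh T I G p).2], ha ▸ Live.stepS p ν hL hsp hν⟩
  | stepN p ν m hL hsp he ih =>
      intro u hu
      have spec := nsCh_spec T I G (live_basic T I G htag hroot hL).1 hsp
      rw [he] at spec
      obtain ⟨a, ha⟩ := spec.1.2
      have ha' : ν = p.1 ++ [a] := ha
      rw [ha'] at hu
      rcases prefix_snoc hu with hu' | rfl
      · exact ih u hu'
      · exact ⟨p.2 ++ [m], ha' ▸ Live.stepN p ν m hL hsp he⟩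

theorem tdag_sub (htag : IsTaggedTree T D I)
    (hroot : (([], []) : OSeq × List ℕ) ∉ WW T I G) :
    Tdag T I G ⊆ T := by
  rintro η ⟨s, hL⟩
  exact (live_basic T I G htag hroot hL).2.1

theorem tdag_succs_split (htag : IsTaggedTree T D I)
    (hroot : (([], []) : OSeq × List ℕ) ∉ WW T I G)
    {η : OSeq} {s : List ℕ} (hL : Live T I G (η, s)) (hsp : η ∈ splitPts T I) :
    succs (Tdag T I G) η = (splitCh T I G (η, s)).1 := by
  ext ν
  constructor
  · rintro ⟨⟨s₂, hL₂⟩, a, rfl⟩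
    obtain ⟨p, hLp, hp1, hcase⟩ := live_parent T I G htag hroot hL₂
    have hLp' : Live T I G (η, p.2) := by
      rw [← hp1]; exact (Prod.mk.eta (p := p)) ▸ hLp
    have hps : p.2 = s := live_unique T I G htag hroot η.length η p.2 s le_rfl hLp' hL
    have hpval : p = (η, s) := Prod.ext hp1 hps
    rcases hcase with ⟨_, hν, _⟩ | ⟨hnsp, _⟩
    · rw [← hpval]; exact hν
    · rw [hpval] at hnsp; exact absurd hsp hnsp
  · intro hν
    have spec := splitCh_spec T I G (live_basic T I G htag hroot hL).1 hsp
    have hLc := Live.stepS (T := T) (I := I) (G := G) (η, s) ν hL hsp hν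
    obtain ⟨a, ha⟩ := (spec.1 hν).2
    exact ⟨⟨s ++ [(splitCh T I G (η, s)).2], hLc⟩, a, ha⟩

theorem tdag_succs_nonsplit (htag : IsTaggedTree T D I)
    (hroot : (([], []) : OSeq × List ℕ) ∉ WW T I G)
    {η : OSeq} {s : List ℕ} (hL : Live T I G (η, s)) (hsp : η ∉ splitPts T I) :
    succs (Tdag T I G) η = {(nsCh T I G (η, s)).1} := by
  ext ν
  constructor
  · rintro ⟨⟨s₂, hL₂⟩, a, rfl⟩
    obtain ⟨p, hLp, hp1, hcase⟩ := live_parent T I G htag hroot hL₂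
    have hLp' : Live T I G (η, p.2) := by
      rw [← hp1]; exact (Prod.mk.eta (p := p)) ▸ hLp
    have hps : p.2 = s := live_unique T I G htag hroot η.length η p.2 s le_rfl hLp' hL
    have hpval : p = (η, s) := Prod.ext hp1 hps
    rcases hcase with ⟨hsp', _⟩ | ⟨_, m, he, _⟩
    · rw [hpval] at hsp'; exact absurd hsp' hsp
    · rw [hpval] at he
      have := congrArg Prod.fst he
      exact mem_singleton_iff.mpr this.symm
  · intro hν
    rw [mem_singleton_iff] at hν
    have spec := nsCh_spec T I G (live_basic T I G htag hroot hL).1 hsp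
    have hLc := Live.stepN (T := T) (I := I) (G := G) (η, s)
      (nsCh T I G (η, s)).1 (nsCh T I G (η, s)).2 hL hsp (Prod.mk.eta).symm
    obtain ⟨a, ha⟩ := spec.1.2
    rw [hν]
    exact ⟨⟨s ++ [(nsCh T I G (η, s)).2], hLc⟩, a, ha⟩

theorem tdag_omega (htag : IsTaggedTree T D I)
    (hroot : (([], []) : OSeq × List ℕ) ∉ WW T I G) :
    IsOmegaTree (Tdag T I G) := by
  refine ⟨⟨[], [], Live.root⟩, ?_, ?_⟩
  · rintro η u ⟨s, hL⟩ hu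
    exact live_prefix T I G htag hroot hL u hu
  · rintro η ⟨s, hL⟩
    by_cases hsp : η ∈ splitPts T I
    · rw [tdag_succs_split T I G htag hroot hL hsp]
      have spec := splitCh_spec T I G (live_basic T I G htag hroot hL).1 hsp
      rcases eq_empty_or_nonempty (splitCh T I G (η, s)).1 with he | hne
      · rw [he] at spec
        exact absurd (empty_mem_ideal htag (live_basic T I G htag hroot hL).2.1) spec.2.1
      · exact hne
    · rw [tdag_succs_nonsplit T I G htag hroot hL hsp]
      exact singleton_nonempty _

theorem tdag_lestar (htag : IsTaggedTree T D I)
    (hroot : (([], []) : OSeq × List ℕ) ∉ WW T I G) :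
    leStar I T (Tdag T I G) := by
  have hsub := tdag_sub T I G htag hroot
  have heq : splitPts (Tdag T I G) I = splitPts T I ∩ Tdag T I G := by
    ext η
    constructor
    · rintro ⟨hη, hbig⟩
      refine ⟨⟨hsub hη, fun hsm => hbig ?_, ⟩, hη⟩
      exact small_of_subset htag (hsub hη) hsm (succs_mono hsub η)
    · rintro ⟨hsp, hη⟩
      obtain ⟨s, hL⟩ := hη
      refine ⟨⟨s, hL⟩, ?_⟩
      rw [tdag_succs_split T I G htag hroot hL hsp]
      exact (splitCh_spec T I G (live_basic T I G htag hroot hL).1 hsp).2.1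
  exact ⟨hsub, by rw [heq]; exact inter_subset_left, heq⟩

theorem tdag_lim (htag : IsTaggedTree T D I)
    (hroot : (([], []) : OSeq × List ℕ) ∉ WW T I G)
    (hGclp : ∀ s, IsClp T (G s)) (BA : Set OBranch)
    (hrep : ∀ x : ↥(limT T), (x : OBranch) ∈ BA ↔ ∃ y : ℕ → ℕ, ∀ n, x ∈ G (ntake y n)) :
    limT (Tdag T I G) ⊆ BA := by
  intro c hc
  have hcT : c ∈ limT T := fun n => tdag_sub T I G htag hroot (hc n)
  have hsex : ∀ n : ℕ, ∃ s, Live T I G (binit c n, s) := fun n => hc n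
  choose sfun hsfun using hsex
  have hstep : ∀ n : ℕ, ∃ m : ℕ, sfun (n + 1) = sfun n ++ [m] := by
    intro n
    have hL1 : Live T I G (binit c n ++ [c n], sfun (n + 1)) := by
      rw [← binit_succ]; exact hsfun (n + 1)
    obtain ⟨p, hLp, hp1, hcase⟩ := live_parent T I G htag hroot hL1
    have hLp' : Live T I G (binit c n, p.2) := by
      rw [← hp1]; exact (Prod.mk.eta (p := p)) ▸ hLp
    have hps : p.2 = sfun n := live_unique T I G htag hroot (binit c n).length
      (binit c n) p.2 (sfun n) le_rfl hLp' (hsfun n)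
    rcases hcase with ⟨_, _, hs⟩ | ⟨_, m, _, hs⟩
    · exact ⟨(splitCh T I G p).2, by rw [hs, hps]⟩
    · exact ⟨m, by rw [hs, hps]⟩
  choose mfun hmfun using hstep
  have hnt : ∀ n, ntake mfun n = sfun n := by
    intro n
    induction n with
    | zero =>
        have h0 : binit c 0 = [] := by simp [binit]
        have := live_nil T I G htag hroot (sfun 0) (h0 ▸ hsfun 0)
        rw [this]; simp [ntake]
    | succ n ih => rw [ntake_succ, hmfun n, ih]
  have key : ∀ k, (⟨c, hcT⟩ : ↥(limT T)) ∈ G (ntake mfun k) := by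
    intro k
    by_contra hk
    obtain ⟨n₀, hcl⟩ := hGclp (ntake mfun k) ⟨c, hcT⟩ hk
    set n := max k n₀ with hn
    have hnE : ¬ Esc T G (binit c n, sfun n) :=
      notin_ww_notesc T I G (live_basic T I G htag hroot (hsfun n)).1
    apply hnE
    have hlen : (sfun n).length = n := by
      have := (live_basic T I G htag hroot (hsfun n)).2.2
      rw [binit_length] at this; exact this.symm
    refine ⟨k, by rw [hlen]; exact le_max_left _ _, ?_⟩
    intro x hx
    have hx' : binit ↑x n = binit c n := by
      rw [binit_length] at hx; exact hx
    have htake : (sfun n).take k = ntake mfun k := by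
      rw [← hnt n, ntake_take mfun (le_max_left k n₀)]
    rw [htake]
    intro hmem
    exact hcl x (binit_agree (le_max_right k n₀) hx') hmem
  exact (hrep ⟨c, hcT⟩).mpr ⟨mfun, key⟩
end Iside3

section IIside
variable (T : Set OSeq) (I : OSeq → Set (Set OSeq))
variable {D : OSeq → Set OSeq}

open Classical in
/-- For each shadow index, the small set of "bad" successors to avoid. -/
def smallBad (lam : Cardinal.{0}) (Gf : ↥(Iio lam.ord) → List ℕ → Set ↥(limT T))
    (α : ↥(Iio lam.ord)) (η : OSeq) (s : List ℕ) (m : ℕ) : Set OSeq :=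
  if ((η, s) ∈ WW T I (Gf α) ∧ ¬ Esc T (Gf α) (η, s) ∧ η ∈ splitPts T I)
  then succs T η \ DescSet T I (Gf α) (η, s) m else ∅

def allBad (lam : Cardinal.{0}) (Gf : ↥(Iio lam.ord) → List ℕ → Set ↥(limT T))
    (η : OSeq) : Set OSeq :=
  ⋃ q : ↥(Iio lam.ord) × List ℕ × ℕ, smallBad T I lam Gf q.1 η q.2.1 q.2.2

theorem smallBad_small (htag : IsTaggedTree T D I) {lam : Cardinal.{0}}
    (Gf : ↥(Iio lam.ord) → List ℕ → Set ↥(limT T))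
    (α : ↥(Iio lam.ord)) {η : OSeq} (hη : η ∈ T) (s : List ℕ) (m : ℕ) :
    smallBad T I lam Gf α η s m ∈ I η := by
  classical
  rw [smallBad]
  split
  · next h => exact descset_cosmall T I (Gf α) h.1 h.2.1 h.2.2 m
  · exact empty_mem_ideal htag hη

theorem allBad_small (htag : IsTaggedTree T D I) {lam : Cardinal.{0}}
    (hlam : Cardinal.aleph0 ≤ lam)
    (hcomp : ∀ η ∈ T, IdealComplete (Order.succ lam) (I η))
    (Gf : ↥(Iio lam.ord) → List ℕ → Set ↥(limT T))
    {η : OSeq} (hη : η ∈ T) :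
    allBad T I lam Gf η ∈ I η := by
  set fam : ↥(Iio lam.ord) × List ℕ × ℕ → Set OSeq :=
    fun q => smallBad T I lam Gf q.1 η q.2.1 q.2.2 with hfam
  have hsub : Set.range fam ⊆ I η := by
    rintro A ⟨q, rfl⟩
    exact smallBad_small T I htag Gf q.1 hη q.2.1 q.2.2
  have hcard : #↥(Set.range fam) < Cardinal.lift.{1, 0} (Order.succ lam) := by
    have h1 : #↥(Set.range fam) ≤ #(↥(Iio lam.ord) × List ℕ × ℕ) := Cardinal.mk_range_le
    have h3 : #↥(Iio lam.ord) = Cardinal.lift.{1, 0} lam := by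
      rw [Ordinal.mk_Iio_ordinal, Cardinal.card_ord]
    have h4 : #(List ℕ × ℕ) = Cardinal.aleph0 := Cardinal.mk_eq_aleph0 _
    have h5 : #(↥(Iio lam.ord) × List ℕ × ℕ) = Cardinal.lift.{1, 0} lam * Cardinal.aleph0 := by
      rw [Cardinal.mk_prod, h3, h4]
      simp [Cardinal.lift_lift, Cardinal.lift_aleph0]
    have h6 : Cardinal.aleph0 ≤ Cardinal.lift.{1, 0} lam := by
      rw [← Cardinal.lift_aleph0.{1, 0}]
      exact Cardinal.lift_le.mpr hlam
    have h7 : Cardinal.lift.{1, 0} lam * Cardinal.aleph0 ≤ Cardinal.lift.{1, 0} lam := by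
      calc Cardinal.lift.{1, 0} lam * Cardinal.aleph0
          ≤ Cardinal.lift.{1, 0} lam * Cardinal.lift.{1, 0} lam :=
            mul_le_mul_right h6 _
        _ = Cardinal.lift.{1, 0} lam := Cardinal.mul_eq_self h6
    have h8 : Cardinal.lift.{1, 0} lam < Cardinal.lift.{1, 0} (Order.succ lam) :=
      Cardinal.lift_lt.mpr (Order.lt_succ lam)
    exact lt_of_le_of_lt (le_trans (h1.trans (le_of_eq h5)) h7) h8
  have := hcomp η hη (Set.range fam) hsub hcard
  rwa [Set.sUnion_range] at this

theorem iiside (htag : IsTaggedTree T D I) {lam : Cardinal.{0}}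
    (hlam : Cardinal.aleph0 ≤ lam)
    (hcomp : ∀ η ∈ T, IdealComplete (Order.succ lam) (I η))
    (B : Ordinal → Set OBranch)
    (hcover : ∀ b ∈ limT T, ∃ α < lam.ord, b ∈ B α)
    (Gf : ↥(Iio lam.ord) → List ℕ → Set ↥(limT T))
    (hGrep : ∀ (α : ↥(Iio lam.ord)) (x : ↥(limT T)),
      (x : OBranch) ∈ B α.1 ↔ ∃ y : ℕ → ℕ, ∀ n, x ∈ Gf α (ntake y n))
    (hAll : ∀ α : ↥(Iio lam.ord), (([], []) : OSeq × List ℕ) ∈ WW T I (Gf α)) :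
    False := by
  classical
  -- choice of a good successor below every node of `T`
  have hchoice : ∀ η : OSeq, ∃ ν : OSeq, η ∈ T →
      ν ∈ succs T η ∧ (η ∈ splitPts T I → ν ∉ allBad T I lam Gf η) := by
    intro η
    by_cases hη : η ∈ T
    · by_cases hsp : η ∈ splitPts T I
      · have hbad := allBad_small T I htag hlam hcomp Gf hη
        have hne : (succs T η \ allBad T I lam Gf η).Nonempty := by
          rcases eq_empty_or_nonempty (succs T η \ allBad T I lam Gf η) with he | hne
          · exfalso
            apply hsp.2
            apply small_of_subset htag hη hbad
            intro ν hν
            by_contra hb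
            exact (eq_empty_iff_forall_notMem.mp he ν) ⟨hν, hb⟩
          · exact hne
        obtain ⟨ν, hν⟩ := hne
        exact ⟨ν, fun _ => ⟨hν.1, fun _ => hν.2⟩⟩
      · obtain ⟨ν, hν⟩ := htag.1.2.2 η hη
        exact ⟨ν, fun _ => ⟨hν, fun h => absurd h hsp⟩⟩
    · exact ⟨[], fun h => absurd h hη⟩
  choose stepf hstepf using hchoice
  -- the branch
  set ηs : ℕ → OSeq := fun n => Nat.rec [] (fun _ η => stepf η) n with hηs
  have hηs0 : ηs 0 = [] := rfl
  have hηsS : ∀ n, ηs (n + 1) = stepf (ηs n) := fun n => rfl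
  have hηsT : ∀ n, ηs n ∈ T := by
    intro n
    induction n with
    | zero => exact nil_mem_tree htag.1
    | succ n ih =>
        rw [hηsS n]
        exact ((hstepf (ηs n) ih).1 : stepf (ηs n) ∈ succs T (ηs n)).1
  have hform : ∀ n, ∃ a : Ordinal, ηs (n + 1) = ηs n ++ [a] := by
    intro n
    obtain ⟨a, ha⟩ := ((hstepf (ηs n) (hηsT n)).1).2
    exact ⟨a, by rw [hηsS n]; exact ha⟩
  choose bf hbf using hform
  have hbinit : ∀ n, binit bf n = ηs n := by
    intro n
    induction n with
    | zero => simp [binit, hηs0]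
    | succ n ih => rw [binit_succ, ih, ← hbf n]
  have hblim : bf ∈ limT T := fun n => (hbinit n) ▸ hηsT n
  -- the covering Borel set catching the branch
  obtain ⟨α, hα, hbB⟩ := hcover bf hblim
  set αx : ↥(Iio lam.ord) := ⟨α, hα⟩ with hαx
  obtain ⟨y, hy⟩ := (hGrep αx ⟨bf, hblim⟩).mp hbB
  -- shadow positions
  set q : ℕ → OSeq × List ℕ := fun n => (binit bf n, ntake y n) with hq
  have hqlen : ∀ n, (ntake y n).length = n := fun n => ntake_length y n
  have hnoesc : ∀ n, ¬ Esc T (Gf αx) (q n) := by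
    rintro n ⟨k, hk, hesc⟩
    have hkn : k ≤ n := by
      have := hqlen n
      simp only [hq] at hk ⊢
      omega
    have h1 : binit (↑(⟨bf, hblim⟩ : ↥(limT T))) (q n).1.length = (q n).1 := by
      simp only [hq, binit_length]
    have := hesc ⟨bf, hblim⟩ h1
    apply this
    have htk : (q n).2.take k = ntake y k := by
      simp only [hq]
      exact ntake_take y hkn
    rw [htk]
    exact hy k
  have hdesc : ∀ n, q n ∈ WW T I (Gf αx) →
      q (n + 1) ∈ WW T I (Gf αx) ∧
        rk T I (Gf αx) (q (n + 1)) < rk T I (Gf αx) (q n) := by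
    intro n hWWn
    have hnE := hnoesc n
    have hsucc : (q (n + 1)).1 ∈ succs T (q n).1 := by
      simp only [hq, hbinit]
      rw [hηsS n]
      exact (hstepf (ηs n) (hηsT n)).1
    have hch : chpos (q n) (q (n + 1)).1 (y n) = q (n + 1) := by
      simp only [hq, chpos]
      rw [ntake_succ]
    by_cases hsp : (q n).1 ∈ splitPts T I
    · -- split case: chosen successor avoids the bad set
      have hnb : (q (n + 1)).1 ∉ allBad T I lam Gf (q n).1 := by
        simp only [hq, hbinit]
        rw [hηsS n]
        exact (hstepf (ηs n) (hηsT n)).2 (by simpa [hq, hbinit] using hsp)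
      have hnsb : (q (n + 1)).1 ∉ smallBad T I lam Gf αx (q n).1 (q n).2 (y n) := by
        intro hmem
        exact hnb (mem_iUnion.mpr ⟨(αx, (q n).2, y n), hmem⟩)
      rw [smallBad, if_pos ⟨(Prod.mk.eta (p := q n)) ▸ hWWn,
        (Prod.mk.eta (p := q n)) ▸ hnE, hsp⟩] at hnsb
      have hdsc : (q (n + 1)).1 ∈ DescSet T I (Gf αx) ((q n).1, (q n).2) (y n) := by
        by_contra hnd
        exact hnsb ⟨hsucc, hnd⟩
      obtain ⟨_, ζ, hζ, hwit⟩ := hdsc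
      have hζ' : ζ < rk T I (Gf αx) (q n) := hζ
      have hwit' : q (n + 1) ∈ Wit T I (Gf αx) ζ := by
        rw [← hch]; exact hwit
      exact ⟨⟨ζ, hwit'⟩, lt_of_le_of_lt (rk_le T I (Gf αx) hwit') hζ'⟩
    · obtain ⟨ζ, hζ, hwit⟩ :=
        desc_nonsplit T I (Gf αx) hWWn hnE hsp hsucc (y n)
      rw [hch] at hwit
      exact ⟨⟨ζ, hwit⟩, lt_of_le_of_lt (rk_le T I (Gf αx) hwit) hζ⟩
  have hmem : ∀ n, q n ∈ WW T I (Gf αx) := by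
    intro n
    induction n with
    | zero => exact hAll αx
    | succ n ih => exact (hdesc n ih).1
  -- infinite descent
  set f : ℕ → Ordinal.{1} := fun n => rk T I (Gf αx) (q n) with hf
  have hlt : ∀ n, f (n + 1) < f n := fun n => (hdesc n (hmem n)).2
  obtain ⟨n, hn⟩ := Ordinal.lt_wf.has_min (Set.range f) ⟨f 0, 0, rfl⟩
  obtain ⟨m, rfl⟩ := hn.1
  exact hn.2 (f (m + 1)) ⟨m + 1, rfl⟩ (hlt m)
end IIside


/-- If `(T, Ī)` is a `λ⁺`-complete tagged tree and
`lim(T) = ⋃_{α<λ} B_α` with each `B_α` Borel in the natural topology, then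
for some `α < λ` there is an ω-tree `T† ⊆ T` with `(T, Ī) ≤* (T†, Ī)` and
`lim(T†) ⊆ B_α`. -/
theorem stmt1 (lam : Cardinal.{0}) (hlam : Cardinal.aleph0 ≤ lam)
    (T : Set OSeq) (D : OSeq → Set OSeq) (I : OSeq → Set (Set OSeq))
    (htag : IsTaggedTree T D I)
    (hcomp : ∀ η ∈ T, IdealComplete (Order.succ lam) (I η))
    (B : Ordinal → Set OBranch)
    (hsub : ∀ α < lam.ord, B α ⊆ limT T)
    (hcover : ∀ b ∈ limT T, ∃ α < lam.ord, b ∈ B α)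
    (hBorel : ∀ α < lam.ord,
      @MeasurableSet _ (limBorel T) ((fun b : ↥(limT T) => (b : OBranch)) ⁻¹' B α)) :
    ∃ α < lam.ord, ∃ T' : Set OSeq, IsOmegaTree T' ∧ leStar I T T' ∧
      limT T' ⊆ B α := by
  classical
  have hS : ∀ α : ↥(Iio lam.ord),
      Suslin T ((fun b : ↥(limT T) => (b : OBranch)) ⁻¹' B α.1) :=
    fun α => suslin_of_measurable T _ (hBorel α.1 α.2)
  choose Gf hGclp hGrep using hS
  by_cases hc : ∃ α : ↥(Iio lam.ord), (([], []) : OSeq × List ℕ) ∉ WW T I (Gf α)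
  · obtain ⟨α, hα⟩ := hc
    refine ⟨α.1, α.2, Tdag T I (Gf α), tdag_omega T I (Gf α) htag hα,
      tdag_lestar T I (Gf α) htag hα, ?_⟩
    exact tdag_lim T I (Gf α) htag hα (hGclp α) (B α.1) (fun x => hGrep α x)
  · push_neg at hc
    exact (iiside T I htag hlam hcomp B hcover Gf
      (fun α x => hGrep α x) hc).elim

end
end

section
/- Let λ be an infinite cardinal with λ^{ℵ₀} = λ, let (T, Ī) be a λ⁺-complete tagged tree, and let g : T → λ be any function. Then there is an ω-tree T† ⊆ T with (T, Ī) ≤* (T†, Ī) and a function g† : ω → λ such that g(η) = g†(length(η)) for every η ∈ T†; that is, on T† the value of g depends only on the length of its argument. -/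
open Cardinal Set

noncomputable section

namespace Stmt2Aux

variable (T : Set OSeq) (I : OSeq → Set (Set OSeq)) (g : OSeq → Ordinal)

/-- Rank-indexed badness predicate. -/
def BadR : Ordinal.{1} → OSeq → (ℕ → Ordinal.{0}) → Prop :=
  WellFounded.fix Ordinal.lt_wf (fun α rec η f =>
    η ∈ T ∧ ∃ X ∈ I η, (succs T η ∈ I η → X = ∅) ∧
      ∀ ν ∈ succs T η, g ν = f (η.length + 1) → ν ∉ X →
        ∃ β, ∃ h : β < α, rec β h ν f)

theorem badR_iff (α : Ordinal.{1}) (η : OSeq) (f : ℕ → Ordinal) :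
    BadR T I g α η f ↔
      η ∈ T ∧ ∃ X ∈ I η, (succs T η ∈ I η → X = ∅) ∧
        ∀ ν ∈ succs T η, g ν = f (η.length + 1) → ν ∉ X →
          ∃ β < α, BadR T I g β ν f := by
  unfold BadR
  rw [WellFounded.fix_eq]
  simp only [exists_prop]

def Bad (η : OSeq) (f : ℕ → Ordinal) : Prop := ∃ α, BadR T I g α η f

def rank (η : OSeq) (f : ℕ → Ordinal) : Ordinal.{1} := sInf {α | BadR T I g α η f}

theorem badR_rank {η f} (h : Bad T I g η f) : BadR T I g (rank T I g η f) η f :=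
  csInf_mem h

theorem rank_le {α η f} (h : BadR T I g α η f) : rank T I g η f ≤ α := csInf_le' h

theorem lenSucc {η ν : OSeq} (h : ν ∈ succs T η) : ν.length = η.length + 1 := by
  obtain ⟨-, a, rfl⟩ := h; simp

theorem mkBad {η : OSeq} {f : ℕ → Ordinal} {X : Set OSeq} (hT : η ∈ T)
    (hX : X ∈ I η) (hXe : succs T η ∈ I η → X = ∅)
    (hch : ∀ ν ∈ succs T η, g ν = f (η.length + 1) → ν ∉ X → Bad T I g ν f) :
    Bad T I g η f := by
  classical
  set S : Set OSeq := {ν | ν ∈ succs T η ∧ g ν = f (η.length + 1) ∧ ν ∉ X} with hS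
  refine ⟨(⨆ ν : S, rank T I g ν.1 f) + 1, ?_⟩
  rw [badR_iff]
  refine ⟨hT, X, hX, hXe, fun ν hν hgν hνX => ?_⟩
  have hmem : ν ∈ S := ⟨hν, hgν, hνX⟩
  refine ⟨rank T I g ν f, ?_, badR_rank T I g (hch ν hν hgν hνX)⟩
  calc rank T I g ν f ≤ ⨆ ν : S, rank T I g ν.1 f :=
        le_ciSup (Ordinal.bddAbove_range.{1,1} _) (⟨ν, hmem⟩ : S)
    _ < _ := lt_add_one _

theorem badR_congr : ∀ (α : Ordinal.{1}) (η : OSeq) (f f' : ℕ → Ordinal),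
    (∀ k, η.length + 1 ≤ k → f k = f' k) → BadR T I g α η f → BadR T I g α η f' := by
  intro α
  induction α using Ordinal.induction with
  | h α IH =>
    intro η f f' hag h
    rw [badR_iff] at h ⊢
    obtain ⟨hT, X, hX, hXe, hch⟩ := h
    refine ⟨hT, X, hX, hXe, fun ν hν hgν hνX => ?_⟩
    have hgν' : g ν = f (η.length + 1) := by rw [hgν, hag (η.length + 1) le_rfl]
    obtain ⟨β, hβ, hb⟩ := hch ν hν hgν' hνX
    have hlen : ν.length = η.length + 1 := lenSucc T hν
    exact ⟨β, hβ, IH β hβ ν f f' (fun k hk => hag k (by omega)) hb⟩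

theorem bad_congr {η : OSeq} {f f' : ℕ → Ordinal}
    (hag : ∀ k, η.length + 1 ≤ k → f k = f' k) (h : Bad T I g η f) : Bad T I g η f' := by
  obtain ⟨α, hα⟩ := h; exact ⟨α, badR_congr T I g α η f f' hag hα⟩

theorem empty_mem {D : OSeq → Set OSeq} (htag : IsTaggedTree T D I) {η : OSeq}
    (hη : η ∈ T) : (∅ : Set OSeq) ∈ I η := by
  obtain ⟨ν, hν⟩ := htag.1.2.2 η hη
  have h1 : ({ν} : Set OSeq) ∈ I η := (htag.2 η hη).1.1 ν ((htag.2 η hη).2 hν)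
  exact (htag.2 η hη).1.2.2.1 _ h1 ∅ (empty_subset _)

theorem downward {η : OSeq} (hη : η ∈ T) {D : OSeq → Set OSeq} (htag : IsTaggedTree T D I)
    {A B : Set OSeq} (hA : A ∈ I η) (hBA : B ⊆ A) : B ∈ I η :=
  (htag.2 η hη).1.2.2.1 _ hA _ hBA

theorem badMod {η : OSeq} {h : ℕ → Ordinal} {α₀ : Ordinal}
    (hb : Bad T I g η (Function.update h (η.length + 1) α₀)) :
    ∃ X ∈ I η, (succs T η ∈ I η → X = ∅) ∧
      {ν | ν ∈ succs T η ∧ g ν = α₀ ∧ ¬ Bad T I g ν h} ⊆ X := by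
  classical
  obtain ⟨α, hα⟩ := hb
  rw [badR_iff] at hα
  obtain ⟨-, X, hX, hXe, hch⟩ := hα
  refine ⟨X, hX, hXe, fun ν hν => ?_⟩
  obtain ⟨hνs, hgν, hnb⟩ := hν
  by_contra hνX
  have hgν' : g ν = Function.update h (η.length + 1) α₀ (η.length + 1) := by
    rw [Function.update_self]; exact hgν
  obtain ⟨β, hβ, hb'⟩ := hch ν hνs hgν' hνX
  have hlen : ν.length = η.length + 1 := lenSucc T hνs
  refine hnb ⟨β, badR_congr T I g β ν _ h (fun k hk => ?_) hb'⟩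
  rw [Function.update_of_ne (by omega)]

/-- The key step for building the subtree: from a node where `g`-fiber sets behave,
either we find a suitable successor set. -/
theorem goodStep {D : OSeq → Set OSeq} (htag : IsTaggedTree T D I) {η : OSeq}
    {f : ℕ → Ordinal} (hη : η ∈ T) (hnb : ¬ Bad T I g η f) :
    (succs T η ∉ I η → {ν | ν ∈ succs T η ∧ g ν = f (η.length + 1) ∧ ¬ Bad T I g ν f} ∉ I η) ∧
    {ν | ν ∈ succs T η ∧ g ν = f (η.length + 1) ∧ ¬ Bad T I g ν f}.Nonempty := by
  classical
  set G := {ν | ν ∈ succs T η ∧ g ν = f (η.length + 1) ∧ ¬ Bad T I g ν f} with hG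
  by_cases hsplit : succs T η ∈ I η
  · refine ⟨fun hc => absurd hsplit hc, ?_⟩
    by_contra hempty
    rw [Set.not_nonempty_iff_eq_empty] at hempty
    refine hnb (mkBad T I g hη (empty_mem T I htag hη) (fun _ => rfl)
      (fun ν hν hgν _ => ?_))
    by_contra hnbν
    have : ν ∈ G := ⟨hν, hgν, hnbν⟩
    rw [hempty] at this
    exact this
  · have hGI : G ∉ I η := by
      intro hGI
      refine hnb (mkBad T I g hη hGI (fun hc => absurd hc hsplit) (fun ν hν hgν hνG => ?_))
      by_contra hnbν
      exact hνG ⟨hν, hgν, hnbν⟩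
    refine ⟨fun _ => hGI, ?_⟩
    rw [Set.nonempty_iff_ne_empty]
    intro hempty
    rw [hempty] at hGI
    exact hGI (empty_mem T I htag hη)

theorem cardF (lam : Cardinal.{0}) (hpow : lam ^ Cardinal.aleph0 = lam) :
    #{f : ℕ → Ordinal.{0} | ∀ n, f n < lam.ord} ≤ Cardinal.lift.{1} lam := by
  have hinj : Function.Injective
      (fun (f : ↥{f : ℕ → Ordinal.{0} | ∀ n, f n < lam.ord}) => fun n : ℕ =>
        (⟨f.1 n, f.2 n⟩ : ↥(Set.Iio lam.ord))) := by
    intro a b hab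
    apply Subtype.ext
    funext n
    exact congrArg Subtype.val (congrFun hab n)
  have h1 : #{f : ℕ → Ordinal.{0} | ∀ n, f n < lam.ord} ≤ #(ℕ → ↥(Set.Iio lam.ord)) :=
    Cardinal.mk_le_of_injective hinj
  have h2 : #(↥(Set.Iio lam.ord)) = Cardinal.lift.{1} lam := by
    rw [Ordinal.mk_Iio_ordinal, Cardinal.card_ord]
  have h3 : #(ℕ → ↥(Set.Iio lam.ord)) = Cardinal.lift.{1} lam := by
    rw [Cardinal.mk_arrow, h2]
    simp only [Cardinal.lift_lift, Cardinal.mk_nat]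
    rw [← Cardinal.lift_power, hpow]
  rw [h3] at h1; exact h1

theorem exists_good {D : OSeq → Set OSeq} (lam : Cardinal.{0})
    (hlam : Cardinal.aleph0 ≤ lam) (hpow : lam ^ Cardinal.aleph0 = lam)
    (htag : IsTaggedTree T D I)
    (hcomp : ∀ η ∈ T, IdealComplete (Order.succ lam) (I η))
    (hg : ∀ η ∈ T, g η < lam.ord) :
    ∃ f : ℕ → Ordinal, (∀ n, f n < lam.ord) ∧ ¬ Bad T I g [] f := by
  classical
  by_contra hcon
  push_neg at hcon
  set A : Set OSeq := {η | η ∈ T ∧ ∀ f : ℕ → Ordinal, (∀ n, f n < lam.ord) → Bad T I g η f}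
    with hA
  have hupd : ∀ (h : ℕ → Ordinal) (m : ℕ) (a : Ordinal), (∀ n, h n < lam.ord) → a < lam.ord →
      ∀ n, Function.update h m a n < lam.ord := by
    intro h m a hh ha n
    rcases eq_or_ne n m with rfl | hne
    · rw [Function.update_self]; exact ha
    · rw [Function.update_of_ne hne]; exact hh n
  have hGset : ∀ η ∈ A, ∀ α₀ < lam.ord, ∀ h : ℕ → Ordinal, (∀ n, h n < lam.ord) →
      {ν | ν ∈ succs T η ∧ g ν = α₀ ∧ ¬ Bad T I g ν h} ∈ I η := by
    intro η hη α₀ hα₀ h hh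
    have hb : Bad T I g η (Function.update h (η.length + 1) α₀) :=
      hη.2 _ (hupd h _ α₀ hh hα₀)
    obtain ⟨X, hX, hXe, hsub⟩ := badMod T I g hb
    exact downward T I hη.1 htag hX hsub
  have hstep : ∀ η ∈ A, ∃ ν, ν ∈ succs T η ∧ ν ∈ A ∧
      ∀ f : ℕ → Ordinal, (∀ n, f n < lam.ord) → f (η.length + 1) = g ν →
        rank T I g ν f < rank T I g η f := by
    intro η hη
    by_cases hsplit : succs T η ∈ I η
    · obtain ⟨ν, hν⟩ := htag.1.2.2 η hη.1
      refine ⟨ν, hν, ⟨hν.1, ?_⟩, ?_⟩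
      · intro h hh
        by_contra hnb
        have hb : Bad T I g η (Function.update h (η.length + 1) (g ν)) :=
          hη.2 _ (hupd h _ _ hh (hg ν hν.1))
        obtain ⟨X, hX, hXe, hsub⟩ := badMod T I g hb
        have hin : ν ∈ X := hsub ⟨hν, rfl, hnb⟩
        rw [hXe hsplit] at hin
        exact hin
      · intro f hf hfν
        have hb := badR_rank T I g (hη.2 f hf)
        rw [badR_iff] at hb
        obtain ⟨-, X, hX, hXe, hch⟩ := hb
        obtain ⟨β, hβ, hb2⟩ := hch ν hν hfν.symm
          (by rw [hXe hsplit]; exact notMem_empty ν)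
        exact lt_of_le_of_lt (rank_le T I g hb2) hβ
    · have hXf : ∀ f : ℕ → Ordinal, ∃ X, X ∈ I η ∧ ((∀ n, f n < lam.ord) →
          ∀ ν ∈ succs T η, g ν = f (η.length + 1) → ν ∉ X →
            rank T I g ν f < rank T I g η f) := by
        intro f
        by_cases hf : ∀ n, f n < lam.ord
        · have hb := badR_rank T I g (hη.2 f hf)
          rw [badR_iff] at hb
          obtain ⟨-, X, hX, hXe, hch⟩ := hb
          refine ⟨X, hX, fun _ ν hν hgν hνX => ?_⟩
          obtain ⟨β, hβ, hb2⟩ := hch ν hν hgν hνX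
          exact lt_of_le_of_lt (rank_le T I g hb2) hβ
        · exact ⟨∅, empty_mem T I htag hη.1, fun h => absurd h hf⟩
      choose Xf hXf1 hXf2 using hXf
      set Gs : Ordinal × (ℕ → Ordinal) → Set OSeq := fun p =>
        {ν | ν ∈ succs T η ∧ g ν = p.1 ∧ ¬ Bad T I g ν p.2} with hGs
      set S : Set (Set OSeq) :=
        (Xf '' {f | ∀ n, f n < lam.ord}) ∪
        (Gs '' {p | p.1 < lam.ord ∧ ∀ n, p.2 n < lam.ord}) with hSdef
      have hSI : S ⊆ I η := by
        rintro s (⟨f, hf, rfl⟩ | ⟨p, hp, rfl⟩)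
        · exact hXf1 f
        · exact hGset η hη p.1 hp.1 p.2 hp.2
      have hc1 : #↥(Xf '' {f | ∀ n, f n < lam.ord}) ≤ Cardinal.lift.{1} lam :=
        le_trans Cardinal.mk_image_le (cardF lam hpow)
      have hprod : {p : Ordinal × (ℕ → Ordinal) | p.1 < lam.ord ∧ ∀ n, p.2 n < lam.ord}
          = (Set.Iio lam.ord) ×ˢ {f : ℕ → Ordinal | ∀ n, f n < lam.ord} := by
        ext p
        simp [Set.mem_prod, Set.mem_Iio]
      have hc2 : #↥(Gs '' {p | p.1 < lam.ord ∧ ∀ n, p.2 n < lam.ord})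
          ≤ Cardinal.lift.{1} lam := by
        refine le_trans Cardinal.mk_image_le ?_
        rw [hprod]
        calc #↥((Set.Iio lam.ord) ×ˢ {f : ℕ → Ordinal | ∀ n, f n < lam.ord})
            = #(↥(Set.Iio lam.ord) × ↥{f : ℕ → Ordinal | ∀ n, f n < lam.ord}) :=
              Cardinal.mk_congr (Equiv.Set.prod _ _)
          _ = #↥(Set.Iio lam.ord) * #↥{f : ℕ → Ordinal | ∀ n, f n < lam.ord} := by
              simp [Cardinal.mk_prod]
          _ ≤ Cardinal.lift.{1} lam * Cardinal.lift.{1} lam := by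
              refine mul_le_mul' ?_ (cardF lam hpow)
              rw [Ordinal.mk_Iio_ordinal, Cardinal.card_ord]
          _ = Cardinal.lift.{1} lam := Cardinal.mul_eq_self (Cardinal.aleph0_le_lift.mpr hlam)
      have hcard : #↥S < Cardinal.lift.{1,0} (Order.succ lam) := by
        calc #↥S ≤ _ + _ := Cardinal.mk_union_le _ _
          _ ≤ Cardinal.lift.{1} lam + Cardinal.lift.{1} lam := add_le_add hc1 hc2
          _ = Cardinal.lift.{1} lam := Cardinal.add_eq_self (Cardinal.aleph0_le_lift.mpr hlam)
          _ < Cardinal.lift.{1,0} (Order.succ lam) := by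
              rw [Cardinal.lift_succ]
              exact Order.lt_succ _
      have hU : ⋃₀ S ∈ I η := hcomp η hη.1 S hSI hcard
      have hns : ¬ succs T η ⊆ ⋃₀ S := fun hsub => hsplit (downward T I hη.1 htag hU hsub)
      obtain ⟨ν, hν, hνU⟩ := not_subset.mp hns
      refine ⟨ν, hν, ⟨hν.1, ?_⟩, ?_⟩
      · intro f hf
        by_contra hnb
        exact hνU ⟨Gs (g ν, f), mem_union_right _ ⟨(g ν, f), ⟨hg ν hν.1, hf⟩, rfl⟩,
          ⟨hν, rfl, hnb⟩⟩
      · intro f hf hfν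
        exact hXf2 f hf ν hν hfν.symm
          (fun hmem => hνU ⟨Xf f, mem_union_left _ ⟨f, hf, rfl⟩, hmem⟩)
  have h0 : ([] : OSeq) ∈ A := by
    refine ⟨?_, hcon⟩
    obtain ⟨η, hη⟩ := htag.1.1
    exact htag.1.2.1 hη List.nil_prefix
  choose! step hstep1 hstep2 hstep3 using hstep
  let seq : ℕ → {x : OSeq // x ∈ A} := fun n =>
    Nat.rec ⟨[], h0⟩ (fun _ p => ⟨step p.1, hstep2 p.1 p.2⟩) n
  have hlen : ∀ n, (seq n).1.length = n := by
    intro n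
    induction n with
    | zero => rfl
    | succ n ih =>
      have hs : (seq (n+1)).1 ∈ succs T (seq n).1 := hstep1 (seq n).1 (seq n).2
      rw [lenSucc T hs, ih]
  set fstar : ℕ → Ordinal := fun n => g ((seq n).1) with hfstar
  have hfF : ∀ n, fstar n < lam.ord := fun n => hg _ ((seq n).2).1
  have hdec : ∀ n, rank T I g (seq (n+1)).1 fstar < rank T I g (seq n).1 fstar := by
    intro n
    exact hstep3 (seq n).1 (seq n).2 fstar hfF (by rw [hlen n])
  obtain ⟨x, ⟨n, rfl⟩, hmin⟩ := Ordinal.lt_wf.has_min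
    (Set.range fun n => rank T I g (seq n).1 fstar) ⟨_, 0, rfl⟩
  exact hmin _ ⟨n + 1, rfl⟩ (hdec n)

end Stmt2Aux

/-- If `λ^ℵ₀ = λ`, `(T, Ī)` is a `λ⁺`-complete tagged tree and
`g : T → λ`, then there is an ω-tree `T† ⊆ T` with `(T, Ī) ≤* (T†, Ī)` on which
`g` depends only on the length of its argument. -/


theorem stmt2 (lam : Cardinal.{0}) (hlam : Cardinal.aleph0 ≤ lam)
    (hpow : lam ^ Cardinal.aleph0 = lam)
    (T : Set OSeq) (D : OSeq → Set OSeq) (I : OSeq → Set (Set OSeq))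
    (htag : IsTaggedTree T D I)
    (hcomp : ∀ η ∈ T, IdealComplete (Order.succ lam) (I η))
    (g : OSeq → Ordinal)
    (hg : ∀ η ∈ T, g η < lam.ord) :
    ∃ T' : Set OSeq, IsOmegaTree T' ∧ leStar I T T' ∧
      ∃ gd : ℕ → Ordinal, (∀ n, gd n < lam.ord) ∧
        ∀ η ∈ T', g η = gd η.length := by

  classical
  obtain ⟨f, hfF, hgood⟩ := Stmt2Aux.exists_good T I g lam hlam hpow htag hcomp hg
  have hTnil : ([] : OSeq) ∈ T := by
    obtain ⟨η, hη⟩ := htag.1.1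
    exact htag.1.2.1 hη List.nil_prefix
  set T' : Set OSeq := {η | η ∈ T ∧ (∀ k ≤ η.length, ¬ Stmt2Aux.Bad T I g (η.take k) f) ∧
      ∀ k, 1 ≤ k → k ≤ η.length → g (η.take k) = f k} with hT'def
  have hnbη : ∀ η ∈ T', ¬ Stmt2Aux.Bad T I g η f := by
    intro η hη
    have h := hη.2.1 η.length le_rfl
    rwa [List.take_length] at h
  have hnil : ([] : OSeq) ∈ T' := by
    refine ⟨hTnil, ?_, ?_⟩
    · intro k hk
      have hk0 : k = 0 := by simpa using hk
      subst hk0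
      simpa using hgood
    · intro k h1 h2
      simp at h2; omega
  have hpref : ∀ ⦃η ν : OSeq⦄, η ∈ T' → ν <+: η → ν ∈ T' := by
    intro η ν hη hνη
    have hts : ν = η.take ν.length := List.prefix_iff_eq_take.mp hνη
    have hlen : ν.length ≤ η.length := hνη.length_le
    refine ⟨htag.1.2.1 hη.1 hνη, ?_, ?_⟩
    · intro k hk
      rw [hts, List.take_take, min_eq_left hk]
      exact hη.2.1 k (le_trans hk hlen)
    · intro k h1 h2
      rw [hts, List.take_take, min_eq_left h2]
      exact hη.2.2 k h1 (le_trans h2 hlen)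
  have htake : ∀ (η : OSeq) (a : Ordinal), (η ++ [a]).take (η.length + 1) = η ++ [a] := by
    intro η a
    rw [show η.length + 1 = (η ++ [a]).length by simp, List.take_length]
  have hGsucc : ∀ η ∈ T',
      {ν | ν ∈ succs T η ∧ g ν = f (η.length + 1) ∧ ¬ Stmt2Aux.Bad T I g ν f}
        = succs T' η := by
    intro η hη
    ext ν
    constructor
    · rintro ⟨hν, hgν, hnb⟩
      obtain ⟨hνT, a, rfl⟩ := hν
      have hlen2 : (η ++ [a]).length = η.length + 1 := by simp
      refine ⟨⟨hνT, ?_, ?_⟩, a, rfl⟩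
      · intro k hk
        rcases Nat.lt_or_ge k (η.length + 1) with hlt | hge
        · have hk' : k ≤ η.length := by omega
          rw [List.take_append_of_le_length hk']
          exact hη.2.1 k hk'
        · have hk2 : k = η.length + 1 := by rw [hlen2] at hk; omega
          subst hk2
          rw [htake η a]
          exact hnb
      · intro k h1 h2
        rcases Nat.lt_or_ge k (η.length + 1) with hlt | hge
        · have hk' : k ≤ η.length := by omega
          rw [List.take_append_of_le_length hk']
          exact hη.2.2 k h1 hk'
        · have hk2 : k = η.length + 1 := by rw [hlen2] at h2; omega
          subst hk2
          rw [htake η a]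
          exact hgν
    · rintro ⟨hν, a, rfl⟩
      have hlen2 : (η ++ [a]).length = η.length + 1 := by simp
      refine ⟨⟨hν.1, a, rfl⟩, ?_, ?_⟩
      · have h := hν.2.2 (η.length + 1) (by omega) (by rw [hlen2])
        rwa [htake η a] at h
      · have h := hν.2.1 (η ++ [a]).length le_rfl
        rwa [List.take_length] at h
  have hsub' : ∀ η, succs T' η ⊆ succs T η := fun η ν hν => ⟨hν.1.1, hν.2⟩
  refine ⟨T', ⟨⟨[], hnil⟩, hpref, ?_⟩, ⟨fun ν hν => hν.1, ?_, ?_⟩, ?_⟩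
  · -- every node of T' has a successor in T'
    intro η hη
    have hne := (Stmt2Aux.goodStep T I g htag hη.1 (hnbη η hη)).2
    rw [hGsucc η hη] at hne
    exact hne
  · -- splitPts T' ⊆ splitPts T
    rintro η ⟨hη, hns⟩
    exact ⟨hη.1, fun hc => hns ((htag.2 η hη.1).1.2.2.1 _ hc _ (hsub' η))⟩
  · -- splitPts T' = splitPts T ∩ T'
    ext η
    constructor
    · rintro ⟨hη, hns⟩
      exact ⟨⟨hη.1, fun hc => hns ((htag.2 η hη.1).1.2.2.1 _ hc _ (hsub' η))⟩, hη⟩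
    · rintro ⟨⟨hηT, hns⟩, hη⟩
      refine ⟨hη, fun hc => ?_⟩
      rw [← hGsucc η hη] at hc
      exact (Stmt2Aux.goodStep T I g htag hηT (hnbη η hη)).1 hns hc
  · -- the level function
    refine ⟨fun n => if n = 0 then g [] else f n, ?_, ?_⟩
    · intro n
      rcases eq_or_ne n 0 with rfl | hn
      · simpa using hg [] hTnil
      · show (if n = 0 then g [] else f n) < lam.ord
        rw [if_neg hn]; exact hfF n
    · intro η hη
      rcases Nat.eq_zero_or_pos η.length with h0 | hpos
      · have : η = [] := List.length_eq_zero_iff.mp h0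
        subst this
        simp
      · have h := hη.2.2 η.length hpos le_rfl
        rw [List.take_length] at h
        show g η = if η.length = 0 then g [] else f η.length
        rw [if_neg (by omega), h]


end
end

section
/- Let λ be a regular uncountable cardinal and let (T, Ī) be a tagged tree such that for every η ∈ T either the ideal I_η is λ⁺-complete or |Succ_T(η)| < λ. Let H : T → λ be any function. Then there are an ordinal α < λ and an ω-tree T' ⊆ T such that (T, Ī) ≤* (T', Ī), H(η) < α for every η ∈ T', and for every η ∈ T' with |Succ_T(η)| < λ one has Succ_{T'}(η) = Succ_T(η). -/
open Cardinal Set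

noncomputable section

namespace Stmt3Proof

/-- A type of universe 1 whose cardinality is `< lift lam` is `Small.{0}`. -/
lemma small_of_mk_lt {X : Type 1} {lam : Cardinal.{0}} (h : #X < Cardinal.lift.{1,0} lam) :
    Small.{0} X := by
  refine small_iff_lift_mk_lt_univ.mpr ?_
  rw [Cardinal.lift_id]
  exact h.trans (Cardinal.lift_lt_univ lam)

/-- A set of ordinals of size `< lift lam` all below `lam.ord` is bounded below `lam.ord`. -/
lemma exists_bound {lam : Cardinal.{0}} (hreg : lam.IsRegular) (s : Set Ordinal.{0})
    (hs : #↥s < Cardinal.lift.{1,0} lam) (hb : ∀ o ∈ s, o < lam.ord) :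
    ∃ β, β < lam.ord ∧ ∀ o ∈ s, o ≤ β := by
  have hsm : Small.{0} ↥s := small_of_mk_lt hs
  set f : Shrink.{0} ↥s → Ordinal.{0} := fun i => ((equivShrink ↥s).symm i : Ordinal) with hf
  have hcard : #(Shrink.{0} ↥s) < lam := by
    have h2 : Cardinal.lift.{1,0} #(Shrink.{0} ↥s) = #↥s := Cardinal.lift_mk_shrink''.{1,0} ↥s
    exact Cardinal.lift_lt.mp (by rw [h2]; exact hs)
  refine ⟨iSup f, ?_, ?_⟩
  · refine Ordinal.iSup_lt_ord ?_ fun i => hb _ ((equivShrink ↥s).symm i).2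
    rwa [hreg.cof_eq]
  · intro o ho
    have : f (equivShrink ↥s ⟨o, ho⟩) = o := by simp [hf]
    rw [← this]
    exact le_ciSup (Ordinal.bddAbove_range f) _

section Aux
variable (T : Set OSeq) (I : OSeq → Set (Set OSeq)) (lam : Cardinal.{0}) (H : OSeq → Ordinal.{0})

def Sml (η : OSeq) : Prop := #↥(succs T η) < Cardinal.lift.{1,0} lam

def Phi (α : Ordinal.{0}) (X : Set OSeq) : Set OSeq :=
  {η | η ∈ T ∧ (α ≤ H η ∨
    (Sml T lam η ∧ ∃ ν ∈ succs T η, ν ∈ X) ∨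
    (¬ Sml T lam η ∧ succs T η ∉ I η ∧ {ν | ν ∈ succs T η ∧ ν ∉ X} ∈ I η) ∨
    (¬ Sml T lam η ∧ succs T η ∈ I η ∧ ∀ ν ∈ succs T η, ν ∈ X))}

def Bad (α : Ordinal.{0}) (ζ : Ordinal.{1}) : Set OSeq :=
  Phi T I lam H α {η | ∃ ξ : Ordinal.{1}, ∃ _ : ξ < ζ, η ∈ Bad α ξ}
termination_by ζ

def BadLt (α : Ordinal.{0}) (ζ : Ordinal.{1}) : Set OSeq :=
  {η | ∃ ξ : Ordinal.{1}, ∃ _ : ξ < ζ, η ∈ Bad T I lam H α ξ}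

lemma Bad_eq (α : Ordinal.{0}) (ζ : Ordinal.{1}) :
    Bad T I lam H α ζ = Phi T I lam H α (BadLt T I lam H α ζ) := by
  rw [Bad]; rfl

def BadAll (α : Ordinal.{0}) : Set OSeq := {η | ∃ ζ, η ∈ Bad T I lam H α ζ}

def rk (α : Ordinal.{0}) (η : OSeq) : Ordinal.{1} := sInf {ζ | η ∈ Bad T I lam H α ζ}

def Binf : Set OSeq := {η | ∀ α, α < lam.ord → η ∈ BadAll T I lam H α}

variable {T I lam H}

lemma Phi_subset_T {α X} : Phi T I lam H α X ⊆ T := fun _ h => h.1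

variable (hI : ∀ η ∈ T, ∃ S, IsIdealOn S (I η))

section withI
include hI

lemma Phi_mono {α : Ordinal.{0}} {X Y : Set OSeq} (hXY : X ⊆ Y) :
    Phi T I lam H α X ⊆ Phi T I lam H α Y := by
  rintro η ⟨hT, h⟩
  obtain ⟨S, hS⟩ := hI η hT
  refine ⟨hT, ?_⟩
  rcases h with h | ⟨h1, ν, h2, h3⟩ | ⟨h1, h2, h3⟩ | ⟨h1, h2, h3⟩
  · exact Or.inl h
  · exact Or.inr (Or.inl ⟨h1, ν, h2, hXY h3⟩)
  · refine Or.inr (Or.inr (Or.inl ⟨h1, h2, hS.2.2.1 _ h3 _ ?_⟩))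
    rintro ν ⟨hν1, hν2⟩
    exact ⟨hν1, fun hY => hν2 (hXY hY)⟩
  · exact Or.inr (Or.inr (Or.inr ⟨h1, h2, fun ν hν => hXY (h3 ν hν)⟩))

lemma Bad_mono {α : Ordinal.{0}} {ζ ζ' : Ordinal.{1}} (h : ζ ≤ ζ') :
    Bad T I lam H α ζ ⊆ Bad T I lam H α ζ' := by
  rw [Bad_eq, Bad_eq]
  refine Phi_mono hI ?_
  rintro η ⟨ξ, hξ, hη⟩
  exact ⟨ξ, lt_of_lt_of_le hξ h, hη⟩

omit hI in
lemma Phi_anti {α α' : Ordinal.{0}} {X : Set OSeq} (h : α ≤ α') :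
    Phi T I lam H α' X ⊆ Phi T I lam H α X := by
  rintro η ⟨hT, hd⟩
  refine ⟨hT, ?_⟩
  rcases hd with hd | hd
  · exact Or.inl (h.trans hd)
  · exact Or.inr hd

lemma Bad_anti {α α' : Ordinal.{0}} (h : α ≤ α') :
    ∀ ζ, Bad T I lam H α' ζ ⊆ Bad T I lam H α ζ := by
  intro ζ
  induction ζ using Ordinal.induction with
  | h ζ ih =>
    rw [Bad_eq, Bad_eq]
    refine (Phi_anti h).trans (Phi_mono hI ?_)
    rintro η ⟨ξ, hξ, hη⟩
    exact ⟨ξ, hξ, ih ξ hξ hη⟩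

lemma BadAll_anti {α α' : Ordinal.{0}} (h : α ≤ α') :
    BadAll T I lam H α' ⊆ BadAll T I lam H α := by
  rintro η ⟨ζ, hζ⟩; exact ⟨ζ, Bad_anti hI h ζ hζ⟩

end withI

lemma rk_mem {α η} (h : η ∈ BadAll T I lam H α) : η ∈ Bad T I lam H α (rk T I lam H α η) :=
  csInf_mem h

lemma rk_le {α η ζ} (h : η ∈ Bad T I lam H α ζ) : rk T I lam H α η ≤ ζ :=
  csInf_le (OrderBot.bddBelow _) h

lemma badLt_elim {α ζ η} (h : η ∈ BadLt T I lam H α ζ) :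
    η ∈ BadAll T I lam H α ∧ rk T I lam H α η < ζ := by
  obtain ⟨ξ, hξ, hη⟩ := h
  exact ⟨⟨ξ, hη⟩, lt_of_le_of_lt (rk_le hη) hξ⟩

lemma badAll_subset_T {α} : BadAll T I lam H α ⊆ T := by
  rintro η ⟨ζ, hζ⟩
  rw [Bad_eq] at hζ
  exact hζ.1

/-- `BadAll` is a prefixed point of `Phi`. -/
lemma prefixed (hI : ∀ η ∈ T, ∃ S, IsIdealOn S (I η)) {α} :
    Phi T I lam H α (BadAll T I lam H α) ⊆ BadAll T I lam H α := by
  rintro η ⟨hT, hd⟩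
  obtain ⟨S, hS⟩ := hI η hT
  rcases hd with hd | ⟨h1, ν, h2, h3⟩ | ⟨h1, h2, h3⟩ | ⟨h1, h2, h3⟩
  · exact ⟨0, by rw [Bad_eq]; exact ⟨hT, Or.inl hd⟩⟩
  · refine ⟨Order.succ (rk T I lam H α ν), ?_⟩
    rw [Bad_eq]
    exact ⟨hT, Or.inr (Or.inl ⟨h1, ν, h2, ⟨rk T I lam H α ν, Order.lt_succ _, rk_mem h3⟩⟩)⟩
  · set Z := {ν | ν ∈ succs T η ∧ ν ∈ BadAll T I lam H α} with hZ
    set f : ↥Z → Ordinal.{1} := fun ν => Order.succ (rk T I lam H α ν.1) with hf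
    refine ⟨iSup f, ?_⟩
    rw [Bad_eq]
    refine ⟨hT, Or.inr (Or.inr (Or.inl ⟨h1, h2, hS.2.2.1 _ h3 _ ?_⟩))⟩
    rintro ν ⟨hν1, hν2⟩
    refine ⟨hν1, fun hbad : ν ∈ BadAll T I lam H α => hν2 ?_⟩
    refine ⟨rk T I lam H α ν, ?_, rk_mem hbad⟩
    calc rk T I lam H α ν < Order.succ (rk T I lam H α ν) := Order.lt_succ _
      _ ≤ iSup f := le_ciSup (Ordinal.bddAbove_range.{1,0} f) (⟨ν, hν1, hbad⟩ : ↥Z)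
  · set f : ↥(succs T η) → Ordinal.{1} := fun ν => Order.succ (rk T I lam H α ν.1) with hf
    refine ⟨iSup f, ?_⟩
    rw [Bad_eq]
    refine ⟨hT, Or.inr (Or.inr (Or.inr ⟨h1, h2, fun ν hν => ?_⟩))⟩
    refine ⟨rk T I lam H α ν, ?_, rk_mem (h3 ν hν)⟩
    calc rk T I lam H α ν < Order.succ (rk T I lam H α ν) := Order.lt_succ _
      _ ≤ iSup f := le_ciSup (Ordinal.bddAbove_range.{1,0} f) (⟨ν, hν⟩ : ↥(succs T η))


/-- Closure properties of the good (non-bad) part. -/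
lemma good_unfold (hI : ∀ η ∈ T, ∃ S, IsIdealOn S (I η)) {α : Ordinal.{0}} {η : OSeq}
    (hT : η ∈ T) (hg : η ∉ BadAll T I lam H α) :
    H η < α ∧
    (Sml T lam η → ∀ ν ∈ succs T η, ν ∉ BadAll T I lam H α) ∧
    (¬ Sml T lam η → succs T η ∉ I η →
      {ν | ν ∈ succs T η ∧ ν ∉ BadAll T I lam H α} ∉ I η) ∧
    (¬ Sml T lam η → succs T η ∈ I η → ∃ ν ∈ succs T η, ν ∉ BadAll T I lam H α) := by
  have hno : ¬ (α ≤ H η ∨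
      (Sml T lam η ∧ ∃ ν ∈ succs T η, ν ∈ BadAll T I lam H α) ∨
      (¬ Sml T lam η ∧ succs T η ∉ I η ∧
        {ν | ν ∈ succs T η ∧ ν ∉ BadAll T I lam H α} ∈ I η) ∨
      (¬ Sml T lam η ∧ succs T η ∈ I η ∧ ∀ ν ∈ succs T η, ν ∈ BadAll T I lam H α)) :=
    fun hd => hg (prefixed hI ⟨hT, hd⟩)
  push_neg at hno
  obtain ⟨h1, h2, h3, h4⟩ := hno
  refine ⟨h1, ?_, ?_, ?_⟩
  · intro hsml ν hν hbad
    exact (h2 hsml) ν hν hbad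
  · intro hb hs
    exact h3 hb hs
  · intro hb hs
    obtain ⟨ν, hν, hbad⟩ := h4 hb hs
    exact ⟨ν, hν, hbad⟩

/-- The key one-step descent lemma for nodes that are bad for all `α < lam.ord`. -/
lemma step (hreg : lam.IsRegular)
    (htree : IsOmegaTree T)
    (hI : ∀ η ∈ T, ∃ S, IsIdealOn S (I η))
    (hsplit : ∀ η ∈ T, IdealComplete (Order.succ lam) (I η) ∨ Sml T lam η)
    (hH : ∀ η ∈ T, H η < lam.ord)
    {η : OSeq} (hη : η ∈ Binf T I lam H) :
    ∃ S : Set OSeq, S.Nonempty ∧ S ⊆ Binf T I lam H ∧ #↥S < Cardinal.lift.{1,0} lam ∧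
      ∃ β, β < lam.ord ∧ ∀ α, β < α → α < lam.ord →
        ∃ ν ∈ S, rk T I lam H α ν < rk T I lam H α η := by
  have hT : η ∈ T := badAll_subset_T (hη 0 hreg.ord_pos)
  have hHη : H η < lam.ord := hH η hT
  have hlim : Order.IsSuccLimit lam.ord := Cardinal.isSuccLimit_ord hreg.aleph0_le
  have h1lam : (1 : Cardinal.{1}) < Cardinal.lift.{1,0} lam := by
    refine lt_of_lt_of_le Cardinal.one_lt_aleph0 ?_
    rw [← Cardinal.lift_aleph0.{1,0}]
    exact Cardinal.lift_le.mpr hreg.aleph0_le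
  have key : ∀ α : Ordinal.{0}, H η < α → α < lam.ord →
      (Sml T lam η ∧ ∃ ν ∈ succs T η, ν ∈ BadLt T I lam H α (rk T I lam H α η)) ∨
      (¬ Sml T lam η ∧ succs T η ∉ I η ∧
        {ν | ν ∈ succs T η ∧ ν ∉ BadLt T I lam H α (rk T I lam H α η)} ∈ I η) ∨
      (¬ Sml T lam η ∧ succs T η ∈ I η ∧
        ∀ ν ∈ succs T η, ν ∈ BadLt T I lam H α (rk T I lam H α η)) := by
    intro α ha1 ha2
    have hb := rk_mem (hη α ha2)
    rw [Bad_eq] at hb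
    rcases hb.2 with h | h | h | h
    · exact absurd h (not_le.mpr ha1)
    · exact Or.inl h
    · exact Or.inr (Or.inl h)
    · exact Or.inr (Or.inr h)
  by_cases hsml : Sml T lam η
  · -- small case
    have hchoice : ∀ ν : OSeq, ∃ γ : Ordinal.{0}, γ < lam.ord ∧
        (ν ∉ Binf T I lam H → ν ∉ BadAll T I lam H γ) := by
      intro ν
      by_cases hb : ν ∈ Binf T I lam H
      · exact ⟨0, hreg.ord_pos, fun h => absurd hb h⟩
      · simp only [Binf, mem_setOf_eq, not_forall] at hb
        obtain ⟨γ, hγ, hν⟩ := hb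
        exact ⟨γ, hγ, fun _ => hν⟩
    choose g hg1 hg2 using hchoice
    have him : #↥(g '' succs T η) < Cardinal.lift.{1,0} lam :=
      lt_of_le_of_lt Cardinal.mk_image_le hsml
    obtain ⟨β₀, hβ₀, hβ₀b⟩ := exists_bound hreg _ him
      (by rintro o ⟨ν, hν, rfl⟩; exact hg1 ν)
    have hβ : max β₀ (H η) < lam.ord := max_lt hβ₀ hHη
    have main : ∀ α, max β₀ (H η) < α → α < lam.ord →
        ∃ ν ∈ succs T η ∩ Binf T I lam H, rk T I lam H α ν < rk T I lam H α η := by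
      intro α hb ha
      have ha1 : H η < α := lt_of_le_of_lt (le_max_right _ _) hb
      rcases key α ha1 ha with ⟨-, ν, hν, hblt⟩ | ⟨h, -⟩ | ⟨h, -⟩
      · obtain ⟨hba, hrk⟩ := badLt_elim hblt
        have hνB : ν ∈ Binf T I lam H := by
          by_contra hnb
          have hngood : ν ∉ BadAll T I lam H (g ν) := hg2 ν hnb
          have hgle : g ν ≤ α :=
            le_of_lt (lt_of_le_of_lt (le_trans (hβ₀b _ ⟨ν, hν, rfl⟩) (le_max_left _ _)) hb)
          exact hngood (BadAll_anti hI hgle hba)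
        exact ⟨ν, ⟨hν, hνB⟩, hrk⟩
      · exact absurd hsml h
      · exact absurd hsml h
    have hsucc1 : max β₀ (H η) < max β₀ (H η) + 1 := by
      rw [Ordinal.add_one_eq_succ]; exact Order.lt_succ _
    have hβ1 : max β₀ (H η) + 1 < lam.ord := by
      rw [Ordinal.add_one_eq_succ]; exact hlim.succ_lt hβ
    obtain ⟨ν, hν, -⟩ := main _ hsucc1 hβ1
    exact ⟨succs T η ∩ Binf T I lam H, ⟨ν, hν⟩, inter_subset_right,
      lt_of_le_of_lt (Cardinal.mk_le_mk_of_subset inter_subset_left) hsml,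
      max β₀ (H η), hβ, main⟩
  · -- big case
    have hcomp : IdealComplete (Order.succ lam) (I η) := (hsplit η hT).resolve_right hsml
    obtain ⟨S0, hS0⟩ := hI η hT
    have hsne : (succs T η).Nonempty := htree.2.2 η hT
    have hHs : H η < H η + 1 := by rw [Ordinal.add_one_eq_succ]; exact Order.lt_succ _
    have hH1 : H η + 1 < lam.ord := by rw [Ordinal.add_one_eq_succ]; exact hlim.succ_lt hHη
    by_cases hns : succs T η ∈ I η
    · -- non-splitting big node
      obtain ⟨ν', hν'⟩ := hsne
      have main : ∀ α, H η < α → α < lam.ord →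
          ν' ∈ BadAll T I lam H α ∧ rk T I lam H α ν' < rk T I lam H α η := by
        intro α ha1 ha2
        rcases key α ha1 ha2 with ⟨h, -⟩ | ⟨-, h, -⟩ | ⟨-, -, h⟩
        · exact absurd h hsml
        · exact absurd hns h
        · exact badLt_elim (h ν' hν')
      have hBinf : ν' ∈ Binf T I lam H := by
        intro γ hγ
        have hα : max γ (H η + 1) < lam.ord := max_lt hγ hH1
        have ha1 : H η < max γ (H η + 1) := lt_of_lt_of_le hHs (le_max_right _ _)
        exact BadAll_anti hI (le_max_left _ _) (main _ ha1 hα).1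
      refine ⟨{ν'}, singleton_nonempty _, by simpa using hBinf, ?_, H η, hHη,
        fun α h1 h2 => ⟨ν', rfl, (main α h1 h2).2⟩⟩
      rw [Cardinal.mk_singleton]
      exact h1lam
    · -- splitting big node
      set A : Ordinal.{0} → Set OSeq :=
        fun α => {ν | ν ∈ succs T η ∧ ν ∉ BadLt T I lam H α (rk T I lam H α η)} with hA
      have hAmem : ∀ α ∈ Set.Ioo (H η) lam.ord, A α ∈ I η := by
        rintro α ⟨ha1, ha2⟩
        rcases key α ha1 ha2 with ⟨h, -⟩ | ⟨-, -, h⟩ | ⟨-, h, -⟩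
        · exact absurd h hsml
        · exact h
        · exact absurd h hns
      set F : Set (Set OSeq) := A '' Set.Ioo (H η) lam.ord with hF
      have hFsub : F ⊆ I η := by rintro X ⟨α, hα, rfl⟩; exact hAmem α hα
      have hFcard : #↥F < Cardinal.lift.{1,0} (Order.succ lam) := by
        calc #↥F ≤ #↥(Set.Ioo (H η) lam.ord) := Cardinal.mk_image_le
          _ ≤ #↥(Set.Iio lam.ord) := Cardinal.mk_le_mk_of_subset fun x hx => hx.2
          _ = Cardinal.lift.{1,0} lam.ord.card := Ordinal.mk_Iio_ordinal _
          _ = Cardinal.lift.{1,0} lam := by rw [Cardinal.card_ord]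
          _ < Cardinal.lift.{1,0} (Order.succ lam) := Cardinal.lift_lt.mpr (Order.lt_succ _)
      have hU : ⋃₀ F ∈ I η := hcomp F hFsub hFcard
      have hnsub : ¬ succs T η ⊆ ⋃₀ F := fun h => hns (hS0.2.2.1 _ hU _ h)
      obtain ⟨ν', hν's, hν'n⟩ := not_subset.mp hnsub
      have main : ∀ α, H η < α → α < lam.ord →
          ν' ∈ BadAll T I lam H α ∧ rk T I lam H α ν' < rk T I lam H α η := by
        intro α ha1 ha2
        have hnA : ν' ∉ A α := fun hmem => hν'n ⟨A α, ⟨α, ⟨ha1, ha2⟩, rfl⟩, hmem⟩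
        have hblt : ν' ∈ BadLt T I lam H α (rk T I lam H α η) := by
          by_contra hc
          exact hnA ⟨hν's, hc⟩
        exact badLt_elim hblt
      have hBinf : ν' ∈ Binf T I lam H := by
        intro γ hγ
        have hα : max γ (H η + 1) < lam.ord := max_lt hγ hH1
        have ha1 : H η < max γ (H η + 1) := lt_of_lt_of_le hHs (le_max_right _ _)
        exact BadAll_anti hI (le_max_left _ _) (main _ ha1 hα).1
      refine ⟨{ν'}, singleton_nonempty _, by simpa using hBinf, ?_, H η, hHη,
        fun α h1 h2 => ⟨ν', rfl, (main α h1 h2).2⟩⟩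
      rw [Cardinal.mk_singleton]
      exact h1lam


/-- The lifted cardinal is regular. -/
lemma lift_isRegular {lam : Cardinal.{0}} (hreg : lam.IsRegular) :
    (Cardinal.lift.{1,0} lam).IsRegular := by
  constructor
  · rw [← Cardinal.lift_aleph0.{1,0}]
    exact Cardinal.lift_le.mpr hreg.aleph0_le
  · have h1 : (Cardinal.lift.{1,0} lam).ord = Ordinal.lift.{1,0} lam.ord :=
      (Cardinal.lift_ord lam).symm
    rw [h1, ← Ordinal.lift_cof, hreg.cof_eq]

/-- There is some `α < lam.ord` for which the root is not bad. -/
lemma exists_good (hreg : lam.IsRegular) (hunc : Cardinal.aleph0 < lam)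
    (htree : IsOmegaTree T)
    (hI : ∀ η ∈ T, ∃ S, IsIdealOn S (I η))
    (hsplit : ∀ η ∈ T, IdealComplete (Order.succ lam) (I η) ∨ Sml T lam η)
    (hH : ∀ η ∈ T, H η < lam.ord) :
    ∃ α, α < lam.ord ∧ ([] : OSeq) ∉ BadAll T I lam H α := by
  by_contra hcon
  push_neg at hcon
  have hroot : ([] : OSeq) ∈ Binf T I lam H := fun α hα => hcon α hα
  have hlim : Order.IsSuccLimit lam.ord := Cardinal.isSuccLimit_ord hreg.aleph0_le
  have h1lam : (1 : Cardinal.{1}) < Cardinal.lift.{1,0} lam := by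
    refine lt_of_lt_of_le Cardinal.one_lt_aleph0 ?_
    rw [← Cardinal.lift_aleph0.{1,0}]
    exact Cardinal.lift_le.mpr hreg.aleph0_le
  have hstep : ∀ η : OSeq, η ∈ Binf T I lam H →
      ∃ S : Set OSeq, S.Nonempty ∧ S ⊆ Binf T I lam H ∧ #↥S < Cardinal.lift.{1,0} lam ∧
      ∃ β, β < lam.ord ∧ ∀ α, β < α → α < lam.ord →
        ∃ ν ∈ S, rk T I lam H α ν < rk T I lam H α η :=
    fun η hη => step hreg htree hI hsplit hH hη
  choose! SS hS1 hS2 hS3 bb hb1 hb2 using hstep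
  let Sq : ℕ → Set OSeq := fun n => Nat.rec {([] : OSeq)} (fun _ prev => ⋃ ν ∈ prev, SS ν) n
  have hSq0 : Sq 0 = {([] : OSeq)} := rfl
  have hSqs : ∀ n, Sq (n + 1) = ⋃ ν ∈ Sq n, SS ν := fun n => rfl
  have hinv : ∀ n, (Sq n).Nonempty ∧ Sq n ⊆ Binf T I lam H ∧
      #↥(Sq n) < Cardinal.lift.{1,0} lam := by
    intro n
    induction n with
    | zero =>
      refine ⟨⟨[], rfl⟩, ?_, ?_⟩
      · intro ν hν; rw [hSq0, mem_singleton_iff] at hν; subst hν; exact hroot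
      · rw [hSq0, Cardinal.mk_singleton]; exact h1lam
    | succ n ih =>
      obtain ⟨⟨ν₀, hν₀⟩, hsub, hcard⟩ := ih
      have hν₀B : ν₀ ∈ Binf T I lam H := hsub hν₀
      refine ⟨?_, ?_, ?_⟩
      · obtain ⟨ν, hν⟩ := hS1 ν₀ hν₀B
        exact ⟨ν, by rw [hSqs]; exact mem_biUnion hν₀ hν⟩
      · intro ν hν
        rw [hSqs] at hν
        obtain ⟨μ, hμ, hνμ⟩ := mem_iUnion₂.mp hν
        exact hS2 μ (hsub hμ) hνμ
      · rw [hSqs, biUnion_eq_iUnion]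
        refine lt_of_le_of_lt Cardinal.mk_iUnion_le_sum_mk ?_
        exact Cardinal.sum_lt_of_isRegular (lift_isRegular hreg) hcard
          (fun ν => hS3 ν.1 (hsub ν.2))
  have hbnd : ∀ n, ∃ b, b < lam.ord ∧ ∀ ν ∈ Sq n, bb ν ≤ b := by
    intro n
    obtain ⟨β, hβ, hβb⟩ := exists_bound hreg (bb '' Sq n)
      (lt_of_le_of_lt Cardinal.mk_image_le (hinv n).2.2)
      (by rintro o ⟨ν, hν, rfl⟩; exact hb1 ν ((hinv n).2.1 hν))
    exact ⟨β, hβ, fun ν hν => hβb _ ⟨ν, hν, rfl⟩⟩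
  choose b hbB hbb using hbnd
  have hsup : (⨆ n, b n) < lam.ord := by
    refine Ordinal.iSup_lt_ord ?_ hbB
    rw [hreg.cof_eq, Cardinal.mk_nat]
    exact hunc
  have hfin : (⨆ n, b n) + 1 < lam.ord := by
    rw [Ordinal.add_one_eq_succ]; exact hlim.succ_lt hsup
  set A : Ordinal.{0} := (⨆ n, b n) + 1 with hAdef
  have hAgt : ∀ n, b n < A := by
    intro n
    refine lt_of_le_of_lt (le_ciSup (Ordinal.bddAbove_range.{0,0} b) n) ?_
    rw [hAdef, Ordinal.add_one_eq_succ]; exact Order.lt_succ _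
  let g : ℕ → Ordinal.{1} := fun n => sInf ((rk T I lam H A) '' Sq n)
  have hgmem : ∀ n, g n ∈ (rk T I lam H A) '' Sq n :=
    fun n => csInf_mem ((hinv n).1.image _)
  have hdesc : ∀ n, g (n + 1) < g n := by
    intro n
    obtain ⟨ν₀, hν₀, hrk⟩ := hgmem n
    have hν₀B : ν₀ ∈ Binf T I lam H := (hinv n).2.1 hν₀
    have hbb' : bb ν₀ < A := lt_of_le_of_lt (hbb n ν₀ hν₀) (hAgt n)
    obtain ⟨ν, hνS, hνrk⟩ := hb2 ν₀ hν₀B A hbb' hfin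
    have hνmem : ν ∈ Sq (n + 1) := by rw [hSqs]; exact mem_biUnion hν₀ hνS
    have hle : g (n + 1) ≤ rk T I lam H A ν :=
      csInf_le (OrderBot.bddBelow _) ⟨ν, hνmem, rfl⟩
    rw [← hrk]
    exact lt_of_le_of_lt hle hνrk
  obtain ⟨n₀, hn₀⟩ := csInf_mem (range_nonempty g)
  have h1 : sInf (Set.range g) ≤ g (n₀ + 1) := csInf_le (OrderBot.bddBelow _) ⟨n₀ + 1, rfl⟩
  rw [← hn₀] at h1
  exact absurd (lt_of_le_of_lt h1 (hdesc n₀)) (lt_irrefl _)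

end Aux
end Stmt3Proof

/-- Let `λ` be regular uncountable and `(T, Ī)` a tagged tree
such that for every `η ∈ T` either `I_η` is `λ⁺`-complete or `|Succ_T(η)| < λ`.
For any `H : T → λ` there are `α < λ` and an ω-tree `T' ⊆ T` with
`(T, Ī) ≤* (T', Ī)`, `H(η) < α` on `T'`, and `Succ_{T'}(η) = Succ_T(η)` whenever
`|Succ_T(η)| < λ`. -/
theorem stmt3 (lam : Cardinal.{0}) (hreg : lam.IsRegular) (hunc : Cardinal.aleph0 < lam)
    (T : Set OSeq) (D : OSeq → Set OSeq) (I : OSeq → Set (Set OSeq))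
    (htag : IsTaggedTree T D I)
    (hsplit : ∀ η ∈ T, IdealComplete (Order.succ lam) (I η) ∨
      #↥(succs T η) < Cardinal.lift.{1, 0} lam)
    (H : OSeq → Ordinal)
    (hH : ∀ η ∈ T, H η < lam.ord) :
    ∃ α < lam.ord, ∃ T' : Set OSeq, IsOmegaTree T' ∧ leStar I T T' ∧
      (∀ η ∈ T', H η < α) ∧
      ∀ η ∈ T', #↥(succs T η) < Cardinal.lift.{1, 0} lam → succs T' η = succs T η := by
  obtain ⟨htree, htag2⟩ := htag
  have hI' : ∀ η ∈ T, ∃ S, IsIdealOn S (I η) := fun η h => ⟨D η, (htag2 η h).1⟩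
  have hsplit' : ∀ η ∈ T, IdealComplete (Order.succ lam) (I η) ∨ Stmt3Proof.Sml T lam η :=
    fun η h => hsplit η h
  obtain ⟨α, hα, hgood⟩ := Stmt3Proof.exists_good hreg hunc htree hI' hsplit' hH
  set T' : Set OSeq :=
    {η | η ∈ T ∧ ∀ k : ℕ, List.take k η ∉ Stmt3Proof.BadAll T I lam H α} with hT'def
  have hT'subT : T' ⊆ T := fun η h => h.1
  have hself : ∀ η ∈ T', η ∉ Stmt3Proof.BadAll T I lam H α := by
    intro η h
    have h2 := h.2 η.length
    rwa [List.take_length] at h2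
  have hGU := fun (η : OSeq) (hη : η ∈ T') =>
    Stmt3Proof.good_unfold hI' hη.1 (hself η hη)
  have hchar : ∀ η ∈ T',
      succs T' η = {ν | ν ∈ succs T η ∧ ν ∉ Stmt3Proof.BadAll T I lam H α} := by
    intro η hη
    ext ν
    constructor
    · rintro ⟨hνT', a, rfl⟩
      exact ⟨⟨hνT'.1, a, rfl⟩, hself _ hνT'⟩
    · rintro ⟨⟨hνT, a, rfl⟩, hνg⟩
      refine ⟨⟨hνT, ?_⟩, a, rfl⟩
      intro k
      rcases le_or_gt k η.length with hk | hk
      · rw [List.take_append_of_le_length hk]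
        exact hη.2 k
      · have hlen : (η ++ [a]).length ≤ k := by
          rw [List.length_append]; simpa using hk
        rw [List.take_of_length_le hlen]
        exact hνg
  have hnil : ([] : OSeq) ∈ T' := by
    refine ⟨?_, fun k => ?_⟩
    · obtain ⟨t, ht⟩ := htree.1
      exact htree.2.1 ht List.nil_prefix
    · simpa using hgood
  have homega : IsOmegaTree T' := by
    refine ⟨⟨[], hnil⟩, ?_, ?_⟩
    · intro η ν hη hpre
      refine ⟨htree.2.1 hη.1 hpre, fun k => ?_⟩
      have hνeq : ν = η.take ν.length := List.prefix_iff_eq_take.mp hpre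
      rw [hνeq, List.take_take]
      exact hη.2 _
    · intro η hη
      have hη4 := hGU η hη
      have hsne := htree.2.2 η hη.1
      rw [hchar η hη]
      by_cases hsml : Stmt3Proof.Sml T lam η
      · obtain ⟨ν, hν⟩ := hsne
        exact ⟨ν, hν, hη4.2.1 hsml ν hν⟩
      · by_cases hns : succs T η ∈ I η
        · obtain ⟨ν, hν, hg⟩ := hη4.2.2.2 hsml hns
          exact ⟨ν, hν, hg⟩
        · have hpos := hη4.2.2.1 hsml hns
          rcases eq_empty_or_nonempty
            {ν | ν ∈ succs T η ∧ ν ∉ Stmt3Proof.BadAll T I lam H α} with he | hne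
          · exfalso
            obtain ⟨x, hx⟩ := hsne
            have hsing : ({x} : Set OSeq) ∈ I η :=
              (htag2 η hη.1).1.1 x ((htag2 η hη.1).2 hx)
            have hemp : (∅ : Set OSeq) ∈ I η :=
              (htag2 η hη.1).1.2.2.1 _ hsing _ (empty_subset _)
            rw [he] at hpos
            exact hpos hemp
          · exact hne
  have hsplitEq : splitPts T' I = splitPts T I ∩ T' := by
    ext η
    constructor
    · rintro ⟨hηT', hsp⟩
      refine ⟨⟨hηT'.1, fun hIin => hsp ?_⟩, hηT'⟩
      have hsub : succs T' η ⊆ succs T η := by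
        rw [hchar η hηT']; exact fun ν hν => hν.1
      exact (htag2 η hηT'.1).1.2.2.1 _ hIin _ hsub
    · rintro ⟨⟨hηT, hsp⟩, hηT'⟩
      refine ⟨hηT', ?_⟩
      rw [hchar η hηT']
      by_cases hsml : Stmt3Proof.Sml T lam η
      · have hall := (hGU η hηT').2.1 hsml
        have heq : {ν | ν ∈ succs T η ∧ ν ∉ Stmt3Proof.BadAll T I lam H α} = succs T η := by
          ext ν; exact ⟨fun h => h.1, fun h => ⟨h, hall ν h⟩⟩
        rw [heq]; exact hsp
      · exact (hGU η hηT').2.2.1 hsml hsp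
  refine ⟨α, hα, T', homega, ⟨hT'subT, ?_, hsplitEq⟩, ?_, ?_⟩
  · rw [hsplitEq]; exact inter_subset_left
  · intro η hη
    exact (hGU η hη).1
  · intro η hη hsml
    rw [hchar η hη]
    have hall := (hGU η hη).2.1 hsml
    ext ν; exact ⟨fun h => h.1, fun h => ⟨h, hall ν h⟩⟩


end
end

section
/- Fix a context c = (λ, μ1, μ2, α*, g1, g2) and let N ∈ K with underlying linear order M. Then the cuts of M with both cofinalities ℵ₀ are dense: for any x < y in M there is a cut (I₀, I₁) of M with x ∈ I₀ and y ∈ I₁ such that I₀ has no last element, I₁ has no first element, the cofinality of I₀ is ℵ₀, and the coinitiality of I₁ is ℵ₀. -/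
open Cardinal Set Function

noncomputable section

/-- A partial function from an (uncountable regular) cardinal into the ordinals:
`dom` is the intended domain and `fn` gives the values (only values at ordinals
below `dom.ord` matter). -/
structure PFn : Type 1 where
  dom : Cardinal.{0}
  fn : Ordinal.{0} → Ordinal.{0}

section OrderDefs

variable {A : Type} (lt : A → A → Prop)

/-- `z` is an upper bound of `s` (w.r.t. the strict order `lt`). -/
def IsUB (s : Set A) (z : A) : Prop := ∀ x ∈ s, ¬ lt z x

/-- `z` is a least upper bound of `s` (w.r.t. the strict order `lt`). -/
def IsLubOf (s : Set A) (z : A) : Prop :=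
  IsUB lt s z ∧ ∀ z', IsUB lt s z' → ¬ lt z' z

/-- `a` is an increasing sequence of length `o` (w.r.t. `lt`). -/
def Inc (o : Ordinal) (a : Ordinal → A) : Prop :=
  ∀ i j : Ordinal, i < j → j < o → lt (a i) (a j)

/-- `a` is an increasing continuous sequence of length `o`. -/
def IncCont (o : Ordinal) (a : Ordinal → A) : Prop :=
  Inc lt o a ∧ ∀ δ, δ < o → Order.IsSuccLimit δ →
    IsLubOf lt {x | ∃ i < δ, x = a i} (a δ)

/-- `c` is a cofinal subset of `S` (w.r.t. `lt`). -/
def CofinalIn (S c : Set A) : Prop :=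
  c ⊆ S ∧ ∀ x ∈ S, ∃ y ∈ c, ¬ lt y x

/-- The suborder `S` has cofinality `θ`: some cofinal subset has cardinality at
most `θ` and every cofinal subset has cardinality at least `θ`. -/
def CofEq (S : Set A) (θ : Cardinal.{0}) : Prop :=
  (∃ c : Set A, CofinalIn lt S c ∧ #↥c ≤ θ) ∧
  ∀ c : Set A, CofinalIn lt S c → θ ≤ #↥c

/-- The suborder `S` has uncountable cofinality. -/
def HasUncCof (S : Set A) : Prop :=
  ∃ θ : Cardinal.{0}, Cardinal.aleph0 < θ ∧ CofEq lt S θ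

/-- The subset `s` is scattered w.r.t. `lt`: the rationals do not embed into it. -/
def ScatteredOn (s : Set A) : Prop :=
  ¬ ∃ f : ℚ → A, (∀ q, f q ∈ s) ∧ ∀ p q : ℚ, p < q → lt (f p) (f q)

end OrderDefs

/-- `C` is a club (closed unbounded set) below the ordinal `o`. -/
def IsClubBelow (C : Set Ordinal) (o : Ordinal) : Prop :=
  (∀ β ∈ C, β < o) ∧ (∀ α < o, ∃ β ∈ C, α < β) ∧
  (∀ δ < o, δ ≠ 0 → (∀ α < δ, ∃ β ∈ C, α < β ∧ β < δ) → δ ∈ C)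

/-- An increasing continuous sequence of ordinals of length `len`. -/
def OrdIncCont (e : Ordinal → Ordinal) (len : Ordinal) : Prop :=
  (∀ i j : Ordinal, i < j → j < len → e i < e j) ∧
  ∀ δ, δ < len → Order.IsSuccLimit δ → ∀ γ : Ordinal, (∀ i < δ, e i ≤ γ) → e δ ≤ γ

/-- The sequence `e` of length `len` has limit `δ`. -/
def OrdLimitOf (e : Ordinal → Ordinal) (len δ : Ordinal) : Prop :=
  (∀ i < len, e i < δ) ∧ ∀ γ < δ, ∃ i < len, γ < e i

/-- `h ∈ F_ℓ` (for `μ = μ_ℓ`): the domain of `h` is an uncountable regular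
cardinal `< μ` and its values are below `α*`. -/
def InF (μ : Cardinal.{0}) (alphaStar : Ordinal) (h : PFn) : Prop :=
  h.dom.IsRegular ∧ Cardinal.aleph0 < h.dom ∧ h.dom < μ ∧
  ∀ ε < h.dom.ord, h.fn ε < alphaStar

/-- `h ∈ F⁺_ℓ` (relative to `g = g_ℓ`). -/
def InFplus (μ : Cardinal.{0}) (alphaStar : Ordinal) (g : Ordinal → PFn) (h : PFn) : Prop :=
  InF μ alphaStar h ∧
  ∀ δ : Ordinal, δ < h.dom.ord → Order.IsSuccLimit δ → Cardinal.aleph0 < δ.cof →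
    ∀ e : Ordinal → Ordinal, OrdIncCont e δ.cof.ord → OrdLimitOf e δ.cof.ord δ →
      ∃ C : Set Ordinal, IsClubBelow C δ.cof.ord ∧
        ∀ i ∈ C, h.fn (e i) = (g (h.fn δ)).fn i

/-- A context `c = (λ, μ₁, μ₂, α*, g₁, g₂)`. -/
structure Ctx : Type 1 where
  lam : Cardinal.{0}
  mu1 : Cardinal.{0}
  mu2 : Cardinal.{0}
  alphaStar : Ordinal.{0}
  g1 : Ordinal.{0} → PFn
  g2 : Ordinal.{0} → PFn

/-- The requirements on a context (Definition 2.3 of the paper). -/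
def Ctx.OK (c : Ctx) : Prop :=
  Cardinal.aleph0 ≤ c.lam ∧
  c.mu1.IsRegular ∧ Cardinal.aleph0 < c.mu1 ∧
  c.mu2.IsRegular ∧ Cardinal.aleph0 < c.mu2 ∧
  Order.succ c.lam = max c.mu1 c.mu2 ∧
  (1 : Ordinal) ≤ c.alphaStar ∧ c.alphaStar < (Order.succ c.lam).ord ∧
  (∀ α < c.alphaStar, InFplus c.mu1 c.alphaStar c.g1 (c.g1 α)) ∧
  (∀ α < c.alphaStar, InFplus c.mu2 c.alphaStar c.g2 (c.g2 α)) ∧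
  (∀ θ : Cardinal.{0}, θ.IsRegular → θ < c.mu1 → ∃ α < c.alphaStar, θ ≤ (c.g1 α).dom) ∧
  (∀ θ : Cardinal.{0}, θ.IsRegular → θ < c.mu2 → ∃ α < c.alphaStar, θ ≤ (c.g2 α).dom)

/-- A coloured linear order candidate: a carrier, a binary relation, and unary
predicates `P α`. -/
structure CStruct : Type 1 where
  A : Type
  lt : A → A → Prop
  P : Ordinal.{0} → Set A

/-- The substructure of `N` on the subset `S`. -/
def CStruct.restrict (N : CStruct) (S : Set N.A) : CStruct where
  A := ↥S
  lt := fun a b => N.lt a.1 b.1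
  P := fun α => {a | a.1 ∈ N.P α}

/-- The up-type condition `(*)¹`: there is an increasing continuous sequence of
length `Dom h` in `S`, unbounded from above in `S`, landing in `P (h ε)` for a
club of `ε`. -/
def UpTypeOn (N : CStruct) (S : Set N.A) (h : PFn) : Prop :=
  ∃ y : Ordinal → N.A,
    (∀ ε < h.dom.ord, y ε ∈ S) ∧
    IncCont N.lt h.dom.ord y ∧
    (∀ x ∈ S, ∃ ε < h.dom.ord, ¬ N.lt (y ε) x) ∧
    ∃ C : Set Ordinal, IsClubBelow C h.dom.ord ∧ ∀ ε ∈ C, y ε ∈ N.P (h.fn ε)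

/-- The dual down-type condition `(*)²`. -/
def DownTypeOn (N : CStruct) (S : Set N.A) (h : PFn) : Prop :=
  UpTypeOn ⟨N.A, Function.swap N.lt, N.P⟩ S h

/-- Membership in the class `K = K(c)` (Definition 2.5 of the paper). -/
def InK (c : Ctx) (N : CStruct) : Prop :=
  -- (i) a linear order
  IsStrictTotalOrder N.A N.lt ∧
  -- (ii) union of countably many scattered suborders
  (∃ s : ℕ → Set N.A, (∀ x, ∃ n, x ∈ s n) ∧ ∀ n, ScatteredOn N.lt (s n)) ∧
  -- (iii) each `P α` is dense
  (∀ α < c.alphaStar, ∀ x y, N.lt x y → ∃ z ∈ N.P α, N.lt x z ∧ N.lt z y) ∧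
  -- (iv) `⟨P α : α < α*⟩` is a partition
  (∀ x, ∃ α < c.alphaStar, x ∈ N.P α) ∧
  (∀ α < c.alphaStar, ∀ β < c.alphaStar, α ≠ β → ∀ x, x ∈ N.P α → x ∉ N.P β) ∧
  -- (v) increasing sequences are short, but long ones exist in every interval
  (∀ (o : Ordinal) (a : Ordinal → N.A), Inc N.lt o a → o < c.mu1.ord) ∧
  (∀ α < c.alphaStar, ∀ x y, N.lt x y →
    ∃ a : Ordinal → N.A, Inc N.lt (c.g1 α).dom.ord a ∧
      ∀ i < (c.g1 α).dom.ord, N.lt x (a i) ∧ N.lt (a i) y) ∧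
  -- (vi) dually for decreasing sequences
  (∀ (o : Ordinal) (a : Ordinal → N.A), Inc (Function.swap N.lt) o a → o < c.mu2.ord) ∧
  (∀ α < c.alphaStar, ∀ x y, N.lt x y →
    ∃ a : Ordinal → N.A, Inc (Function.swap N.lt) (c.g2 α).dom.ord a ∧
      ∀ i < (c.g2 α).dom.ord, N.lt x (a i) ∧ N.lt (a i) y) ∧
  -- (vii) least upper bounds along a club
  (∀ κ : Cardinal.{0}, κ.IsRegular → Cardinal.aleph0 < κ → κ < c.mu1 →
    ∀ a : Ordinal → N.A, Inc N.lt κ.ord a → (∃ b, ∀ i < κ.ord, N.lt (a i) b) →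
      ∃ C : Set Ordinal, IsClubBelow C κ.ord ∧
        ∀ δ ∈ insert κ.ord C, ∃ z, IsLubOf N.lt {x | ∃ i < δ, x = a i} z) ∧
  -- (viii) greatest lower bounds along a club
  (∀ κ : Cardinal.{0}, κ.IsRegular → Cardinal.aleph0 < κ → κ < c.mu2 →
    ∀ a : Ordinal → N.A, Inc (Function.swap N.lt) κ.ord a →
      (∃ b, ∀ i < κ.ord, N.lt b (a i)) →
      ∃ C : Set Ordinal, IsClubBelow C κ.ord ∧
        ∀ δ ∈ insert κ.ord C, ∃ z, IsLubOf (Function.swap N.lt) {x | ∃ i < δ, x = a i} z) ∧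
  -- (ix) cofinalities and up-types below points of `P α`
  (∀ α < c.alphaStar, ∀ x ∈ N.P α,
    CofEq N.lt {y | N.lt y x} (c.g1 α).dom ∧
    (Cardinal.aleph0 < (c.g1 α).dom → UpTypeOn N {y | N.lt y x} (c.g1 α))) ∧
  -- (x) dually above points of `P α`
  (∀ α < c.alphaStar, ∀ x ∈ N.P α,
    CofEq (Function.swap N.lt) {y | N.lt x y} (c.g2 α).dom ∧
    (Cardinal.aleph0 < (c.g2 α).dom → DownTypeOn N {y | N.lt x y} (c.g2 α)))

/-- Membership in `K_{h₁,h₂}`. -/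
def InKhh (c : Ctx) (h1 h2 : PFn) (N : CStruct) : Prop :=
  InK c N ∧ UpTypeOn N Set.univ h1 ∧ DownTypeOn N Set.univ h2


/-- For `N ∈ K`, the cuts with both cofinalities `ℵ₀` are
dense in the underlying linear order. -/
theorem stmt13 (c : Ctx) (hc : Ctx.OK c) (N : CStruct) (hN : InK c N)
    (x y : N.A) (hxy : N.lt x y) :
    ∃ I₀ I₁ : Set N.A,
      (∀ z, z ∈ I₀ ∨ z ∈ I₁) ∧ (∀ z, ¬ (z ∈ I₀ ∧ z ∈ I₁)) ∧
      (∀ a ∈ I₀, ∀ b ∈ I₁, N.lt a b) ∧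
      x ∈ I₀ ∧ y ∈ I₁ ∧
      (∀ a ∈ I₀, ∃ b ∈ I₀, N.lt a b) ∧
      (∀ a ∈ I₁, ∃ b ∈ I₁, N.lt b a) ∧
      CofEq N.lt I₀ Cardinal.aleph0 ∧
      CofEq (Function.swap N.lt) I₁ Cardinal.aleph0 := by
  classical
  obtain ⟨hSTO, ⟨s, hcov, hscat⟩, hdense, -, -, -, -, -, -, -, -, -, -⟩ := hN
  haveI := hSTO
  haveI : DecidableRel N.lt := Classical.decRel _
  letI : LinearOrder N.A := linearOrderOfSTO N.lt
  have hlt : ∀ a b : N.A, N.lt a b ↔ a < b := fun _ _ => Iff.rfl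
  have h0 : (0 : Ordinal) < c.alphaStar :=
    lt_of_lt_of_le zero_lt_one hc.2.2.2.2.2.2.1
  have dens : ∀ a b : N.A, N.lt a b → ∃ z, N.lt a z ∧ N.lt z b := by
    intro a b hab
    obtain ⟨z, -, hz⟩ := hdense 0 h0 a b hab
    exact ⟨z, hz⟩
  -- key step: inside any interval find a subinterval avoiding `s n`
  have step : ∀ (a b : N.A) (n : ℕ), N.lt a b →
      ∃ a' b' : N.A, N.lt a a' ∧ N.lt a' b' ∧ N.lt b' b ∧
        ∀ z ∈ s n, N.lt z a' ∨ N.lt b' z := by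
    intro a b n hab
    by_cases hd : ∀ u v : N.A, N.lt a u → N.lt u v → N.lt v b →
        ∃ w ∈ s n, N.lt u w ∧ N.lt w v
    · exfalso
      set T : Set N.A := {w | w ∈ s n ∧ N.lt a w ∧ N.lt w b} with hT
      have hTmem : ∀ w, w ∈ T ↔ w ∈ s n ∧ N.lt a w ∧ N.lt w b := fun _ => Iff.rfl
      -- T is densely ordered
      haveI : DenselyOrdered T := by
        constructor
        rintro ⟨p, hp⟩ ⟨q, hq⟩ hpq
        have hpq' : N.lt p q := hpq
        obtain ⟨w, hws, hpw, hwq⟩ := hd p q hp.2.1 hpq' hq.2.2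
        refine ⟨⟨w, hws, _root_.trans hp.2.1 hpw, _root_.trans hwq hq.2.2⟩, ?_, ?_⟩
        · exact hpw
        · exact hwq
      -- T is nontrivial
      haveI : Nontrivial T := by
        obtain ⟨m, ham, hmb⟩ := dens a b hab
        obtain ⟨u, hau, hum⟩ := dens a m ham
        obtain ⟨w1, hw1s, huw1, hw1m⟩ := hd u m hau hum hmb
        have hw1T : w1 ∈ T := ⟨hw1s, _root_.trans hau huw1, _root_.trans hw1m hmb⟩
        obtain ⟨v', hw1v', hv'b⟩ := dens w1 b hw1T.2.2
        obtain ⟨w2, hw2s, hw1w2, hw2v'⟩ := hd w1 v' hw1T.2.1 hw1v' hv'b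
        have hw2T : w2 ∈ T := ⟨hw2s, _root_.trans hw1T.2.1 hw1w2,
          _root_.trans hw2v' hv'b⟩
        exact ⟨⟨w1, hw1T⟩, ⟨w2, hw2T⟩, fun h => by
          have : w1 = w2 := congrArg Subtype.val h
          exact absurd hw1w2 (this ▸ irrefl_of N.lt w2)⟩
      obtain ⟨f⟩ := Order.embedding_from_countable_to_dense (α := ℚ) (β := T)
      exact hscat n ⟨fun q => (f q).1, fun q => (f q).2.1,
        fun p q hpq => Subtype.coe_lt_coe.2 (f.lt_iff_lt.2 hpq)⟩
    · push_neg at hd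
      obtain ⟨u, v, hau, huv, hvb, hempty⟩ := hd
      obtain ⟨a', hua', ha'v⟩ := dens u v huv
      obtain ⟨b', ha'b', hb'v⟩ := dens a' v ha'v
      refine ⟨a', b', _root_.trans hau hua', ha'b', _root_.trans hb'v hvb, ?_⟩
      intro z hz
      rcases trichotomous_of N.lt z a' with h | h | h
      · exact Or.inl h
      · subst h; exact absurd ha'v (hempty z hz hua')
      rcases trichotomous_of N.lt z b' with h' | h' | h'
      · exact absurd (_root_.trans h' hb'v) (hempty z hz (_root_.trans hua' h))
      · subst h'; exact absurd hb'v (hempty z hz (_root_.trans hua' ha'b'))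
      · exact Or.inr h'
  choose A' B' hA hAB hB havoid using step
  -- the recursive sequence of nested intervals
  let F : ℕ → {p : N.A × N.A // N.lt p.1 p.2} := fun n =>
    Nat.rec ⟨(x, y), hxy⟩
      (fun n p => ⟨(A' p.1.1 p.1.2 n p.2, B' p.1.1 p.1.2 n p.2), hAB _ _ _ _⟩) n
  let a : ℕ → N.A := fun n => (F n).1.1
  let b : ℕ → N.A := fun n => (F n).1.2
  have hab : ∀ n, N.lt (a n) (b n) := fun n => (F n).2
  have hstepa : ∀ n, N.lt (a n) (a (n + 1)) := fun n => hA _ _ _ _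
  have hstepb : ∀ n, N.lt (b (n + 1)) (b n) := fun n => hB _ _ _ _
  have havoid' : ∀ n, ∀ z ∈ s n, N.lt z (a (n + 1)) ∨ N.lt (b (n + 1)) z :=
    fun n => havoid _ _ _ _
  have amono : StrictMono a := strictMono_nat_of_lt_succ hstepa
  have banti : StrictAnti b := strictAnti_nat_of_succ_lt hstepb
  have hab' : ∀ m k, N.lt (a m) (b k) := by
    intro m k
    have h1 : a m ≤ a (max m k) := amono.monotone (le_max_left m k)
    have h2 : b (max m k) ≤ b k := banti.antitone (le_max_right m k)
    exact (hlt _ _).2 (lt_of_le_of_lt h1 (lt_of_lt_of_le (hab _) h2))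
  refine ⟨{z | ∃ n, z ≤ a n}, {z | ∃ n, b n ≤ z}, ?_, ?_, ?_, ?_, ?_, ?_, ?_, ?_, ?_⟩
  · -- coverage
    intro z
    obtain ⟨n, hzn⟩ := hcov z
    rcases havoid' n z hzn with h | h
    · exact Or.inl ⟨n + 1, le_of_lt h⟩
    · exact Or.inr ⟨n + 1, le_of_lt h⟩
  · -- disjointness
    rintro z ⟨⟨n, hn⟩, ⟨m, hm⟩⟩
    exact absurd (le_trans hm hn) (not_le.2 ((hlt _ _).1 (hab' n m)))
  · -- separation
    rintro p ⟨n, hn⟩ q ⟨m, hm⟩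
    exact (hlt _ _).2 (lt_of_le_of_lt hn (lt_of_lt_of_le ((hlt _ _).1 (hab' n m)) hm))
  · exact ⟨0, le_refl x⟩
  · exact ⟨0, le_refl y⟩
  · -- no last element of I₀
    rintro p ⟨n, hn⟩
    exact ⟨a (n + 1), ⟨n + 1, le_refl _⟩,
      (hlt _ _).2 (lt_of_le_of_lt hn (amono (Nat.lt_succ_self n)))⟩
  · -- no first element of I₁
    rintro p ⟨n, hn⟩
    exact ⟨b (n + 1), ⟨n + 1, le_refl _⟩,
      (hlt _ _).2 (lt_of_lt_of_le (banti (Nat.lt_succ_self n)) hn)⟩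
  · -- cofinality of I₀ is ℵ₀
    constructor
    · refine ⟨Set.range a, ⟨?_, ?_⟩, ?_⟩
      · rintro w ⟨n, rfl⟩; exact ⟨n, le_refl _⟩
      · rintro z ⟨n, hn⟩
        exact ⟨a n, ⟨n, rfl⟩, not_lt.2 hn⟩
      · haveI := (Set.countable_range a).to_subtype
        exact Cardinal.mk_le_aleph0
    · intro d hd
      rw [Cardinal.aleph0_le_mk_iff]
      by_contra hinf
      rw [not_infinite_iff_finite] at hinf
      have hfin : d.Finite := Set.toFinite d
      obtain ⟨w, hwd, hwx⟩ := hd.2 x ⟨0, le_refl x⟩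
      obtain ⟨m, hmd, hmax⟩ := Set.Finite.exists_maximalFor id d hfin ⟨w, hwd⟩
      obtain ⟨n, hn⟩ := hd.1 hmd
      have h1 : N.lt m (a (n + 1)) := (hlt _ _).2 (lt_of_le_of_lt hn (amono (Nat.lt_succ_self n)))
      obtain ⟨w', hw'd, hw'⟩ := hd.2 (a (n + 1)) ⟨n + 1, le_refl _⟩
      have h2 : a (n + 1) ≤ w' := not_lt.1 hw'
      rcases le_total w' m with h | h
      · exact absurd ((hlt _ _).1 h1) (not_lt.2 (le_trans h2 h))
      · have h3 : m = w' := le_antisymm h (hmax hw'd h)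
        rw [h3] at h1
        exact absurd ((hlt _ _).1 h1) (not_lt.2 h2)
  · -- coinitiality of I₁ is ℵ₀
    constructor
    · refine ⟨Set.range b, ⟨?_, ?_⟩, ?_⟩
      · rintro w ⟨n, rfl⟩; exact ⟨n, le_refl _⟩
      · rintro z ⟨n, hn⟩
        exact ⟨b n, ⟨n, rfl⟩, not_lt.2 hn⟩
      · haveI := (Set.countable_range b).to_subtype
        exact Cardinal.mk_le_aleph0
    · intro d hd
      rw [Cardinal.aleph0_le_mk_iff]
      by_contra hinf
      rw [not_infinite_iff_finite] at hinf
      have hfin : d.Finite := Set.toFinite d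
      obtain ⟨w, hwd, hwy⟩ := hd.2 y ⟨0, le_refl y⟩
      obtain ⟨m, hmd, hmin⟩ := Set.Finite.exists_minimalFor id d hfin ⟨w, hwd⟩
      obtain ⟨n, hn⟩ := hd.1 hmd
      have h1 : N.lt (b (n + 1)) m := (hlt _ _).2 (lt_of_lt_of_le (banti (Nat.lt_succ_self n)) hn)
      obtain ⟨w', hw'd, hw'⟩ := hd.2 (b (n + 1)) ⟨n + 1, le_refl _⟩
      have h2 : w' ≤ b (n + 1) := not_lt.1 hw'
      rcases le_total m w' with h | h
      · exact absurd ((hlt _ _).1 h1) (not_lt.2 (le_trans h h2))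
      · have h3 : m = w' := le_antisymm (hmin hw'd h) h
        rw [h3] at h1
        exact absurd ((hlt _ _).1 h1) (not_lt.2 h2)

end
end

section
/- Let λ be an infinite cardinal, κ ≤ λ, let U be a family of nonempty subsets of λ each of cardinality < κ, and let D be a fine normal filter on U. If ◊*_D holds then ◊_D holds; that is: if there is a sequence ⟨P_u : u ∈ U⟩ with each P_u a family of subsets of u of cardinality |P_u| ≤ |u| such that for every X ⊆ λ the set {u ∈ U : X ∩ u ∈ P_u} belongs to D, then there is a sequence ⟨B_u : u ∈ U⟩ with B_u ⊆ u such that for every B ⊆ λ the set {u ∈ U : B ∩ u = B_u} is not empty mod D (its complement in U does not belong to D). -/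
open Cardinal Set

noncomputable section

/-- `D` is a (proper) filter on the family `U` of sets. -/
def IsSetFilter (U : Set (Set Ordinal)) (D : Set (Set (Set Ordinal))) : Prop :=
  D.Nonempty ∧ (∀ A ∈ D, A ⊆ U) ∧
  (∀ A ∈ D, ∀ B, A ⊆ B → B ⊆ U → B ∈ D) ∧
  (∀ A ∈ D, ∀ B ∈ D, A ∩ B ∈ D) ∧ (∅ : Set (Set Ordinal)) ∉ D

/-- `D` is fine: for every `α < λ` the set of `u ∈ U` containing `α` is in `D`. -/
def FineOn (lam : Cardinal.{0}) (U : Set (Set Ordinal)) (D : Set (Set (Set Ordinal))) : Prop :=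
  ∀ α < lam.ord, {u | u ∈ U ∧ α ∈ u} ∈ D

/-- `D` is normal: closed under diagonal intersections. -/
def NormalOn (lam : Cardinal.{0}) (U : Set (Set Ordinal)) (D : Set (Set (Set Ordinal))) : Prop :=
  ∀ A : Ordinal → Set (Set Ordinal), (∀ α < lam.ord, A α ∈ D) →
    {u | u ∈ U ∧ ∀ α ∈ u, u ∈ A α} ∈ D

/-- `X ⊆ U` is empty mod `D`: its complement in `U` belongs to `D`. -/
def EmptyModD (U : Set (Set Ordinal)) (D : Set (Set (Set Ordinal)))
    (X : Set (Set Ordinal)) : Prop :=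
  U \ X ∈ D


/-- `◊*_D`: there is `⟨P_u : u ∈ U⟩`, `P_u` a family of at most `|u|` subsets of
`u`, guessing every `X ⊆ λ` on a set in `D`. -/
def DiamondStar (lam : Cardinal.{0}) (U : Set (Set Ordinal))
    (D : Set (Set (Set Ordinal))) : Prop :=
  ∃ P : Set Ordinal → Set (Set Ordinal),
    (∀ u ∈ U, (∀ A ∈ P u, A ⊆ u) ∧ #↥(P u) ≤ #↥u) ∧
    ∀ X : Set Ordinal, X ⊆ Set.Iio lam.ord → {u | u ∈ U ∧ X ∩ u ∈ P u} ∈ D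

/-- `◊_D`: there is `⟨B_u : u ∈ U⟩`, `B_u ⊆ u`, guessing every `B ⊆ λ` on a set
which is not empty mod `D`. -/
def DiamondD (lam : Cardinal.{0}) (U : Set (Set Ordinal))
    (D : Set (Set (Set Ordinal))) : Prop :=
  ∃ B : Set Ordinal → Set Ordinal,
    (∀ u ∈ U, B u ⊆ u) ∧
    ∀ X : Set Ordinal, X ⊆ Set.Iio lam.ord →
      ¬ EmptyModD U D {u | u ∈ U ∧ X ∩ u = B u}

/-- For a fine normal filter `D` on a family `U` of nonempty
subsets of `λ` of size `< κ`, `◊*_D` implies `◊_D`. -/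
theorem stmt19 (lam κ : Cardinal.{0}) (hlam : Cardinal.aleph0 ≤ lam) (hκ : κ ≤ lam)
    (U : Set (Set Ordinal))
    (hU : ∀ u ∈ U, u.Nonempty ∧ u ⊆ Set.Iio lam.ord ∧ #↥u < Cardinal.lift.{1, 0} κ)
    (D : Set (Set (Set Ordinal)))
    (hD : IsSetFilter U D) (hfine : FineOn lam U D) (hnorm : NormalOn lam U D)
    (hds : DiamondStar lam U D) :
    DiamondD lam U D := by
  classical
  obtain ⟨P, hP, hPguess⟩ := hds
  obtain ⟨hDne, hDsub, hDup, hDint, hDproper⟩ := hD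
  -- a pairing function on ordinals below lam.ord
  have hcard : #(↥(Set.Iio lam.ord) × ↥(Set.Iio lam.ord)) ≤ #↥(Set.Iio lam.ord) := by
    rw [Cardinal.mk_prod, Ordinal.mk_Iio_ordinal, Cardinal.card_ord]
    simp only [Cardinal.lift_id]
    exact le_of_eq (Cardinal.mul_eq_self (Cardinal.aleph0_le_lift.mpr hlam))
  obtain ⟨g⟩ := (Cardinal.le_def _ _).mp hcard
  set pr : Ordinal → Ordinal → Ordinal := fun α β =>
    if h : α < lam.ord ∧ β < lam.ord then (g (⟨α, h.1⟩, ⟨β, h.2⟩) : Ordinal) else 0 with hprdef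
  have hprlt : ∀ α β, α < lam.ord → β < lam.ord → pr α β < lam.ord := by
    intro α β hα hβ
    simp only [hprdef, dif_pos (And.intro hα hβ)]
    exact (g (⟨α, hα⟩, ⟨β, hβ⟩)).2
  have hprinj : ∀ α β α' β', α < lam.ord → β < lam.ord → α' < lam.ord → β' < lam.ord →
      pr α β = pr α' β' → α = α' ∧ β = β' := by
    intro α β α' β' hα hβ hα' hβ' heq
    simp only [hprdef, dif_pos (And.intro hα hβ), dif_pos (And.intro hα' hβ')] at heq
    have := g.injective (Subtype.ext heq)
    exact ⟨congrArg (fun p => (p.1 : Ordinal)) this, congrArg (fun p => (p.2 : Ordinal)) this⟩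
  -- enumerations of the P u's
  have hEex : ∀ u : Set Ordinal, ∃ E : Ordinal → Set Ordinal,
      u ∈ U → (∀ α, E α ⊆ u) ∧ ∀ A ∈ P u, ∃ α ∈ u, E α = A := by
    intro u
    by_cases hu : u ∈ U
    · obtain ⟨hPsub, hPcard⟩ := hP u hu
      obtain ⟨f⟩ := (Cardinal.le_def _ _).mp hPcard
      refine ⟨fun α => if h : ∃ A : ↥(P u), ((f A : ↥u) : Ordinal) = α then
        ((h.choose : ↥(P u)) : Set Ordinal) else ∅, fun _ => ⟨?_, ?_⟩⟩
      · intro α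
        dsimp only
        split_ifs with h
        · exact hPsub _ h.choose.2
        · exact Set.empty_subset u
      · intro A hA
        have h : ∃ A' : ↥(P u), ((f A' : ↥u) : Ordinal) = ((f ⟨A, hA⟩ : ↥u) : Ordinal) :=
          ⟨⟨A, hA⟩, rfl⟩
        refine ⟨((f ⟨A, hA⟩ : ↥u) : Ordinal), (f ⟨A, hA⟩).2, ?_⟩
        dsimp only
        rw [dif_pos h]
        have h2 : h.choose = ⟨A, hA⟩ := f.injective (Subtype.ext h.choose_spec)
        rw [h2]
    · exact ⟨fun _ => ∅, fun h => absurd h hu⟩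
  choose E hEspec using hEex
  -- candidate diamond sequences
  set Bseq : Ordinal → Set Ordinal → Set Ordinal :=
    fun α u => {β | β ∈ u ∧ pr α β ∈ E u α} with hBseqdef
  by_contra hcon
  rw [DiamondD] at hcon
  push_neg at hcon
  have hXex := fun α : Ordinal => hcon (Bseq α) (fun u _ β hβ => hβ.1)
  choose X hX1 hX2 using hXex
  -- code the counterexamples into one set
  set Y : Set Ordinal := {γ | ∃ α, α < lam.ord ∧ ∃ β ∈ X α, γ = pr α β} with hYdef
  have hYsub : Y ⊆ Set.Iio lam.ord := by
    rintro γ ⟨α, hα, β, hβ, rfl⟩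
    exact hprlt α β hα (hX1 α hβ)
  have hS : {u | u ∈ U ∧ Y ∩ u ∈ P u} ∈ D := hPguess Y hYsub
  -- closure set
  have hAmem : ∀ α, α < lam.ord → {u | u ∈ U ∧ ∀ β ∈ u, pr α β ∈ u} ∈ D := by
    intro α hα
    have h1 : {u | u ∈ U ∧ ∀ β ∈ u, u ∈ {u' | u' ∈ U ∧ pr α β ∈ u'}} ∈ D :=
      hnorm (fun β => {u' | u' ∈ U ∧ pr α β ∈ u'})
        (fun β hβ => hfine (pr α β) (hprlt α β hα hβ))
    refine hDup _ h1 _ ?_ ?_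
    · rintro u ⟨hu, h⟩
      exact ⟨hu, fun β hβ => (h β hβ).2⟩
    · rintro u ⟨hu, _⟩
      exact hu
  have hCl : {u | u ∈ U ∧ ∀ α ∈ u, u ∈ {u' | u' ∈ U ∧ ∀ β ∈ u', pr α β ∈ u'}} ∈ D :=
    hnorm _ hAmem
  -- failure diagonal
  have hN : {u | u ∈ U ∧ ∀ α ∈ u,
      u ∈ U \ {u' | u' ∈ U ∧ X α ∩ u' = Bseq α u'}} ∈ D :=
    hnorm _ (fun α _ => hX2 α)
  -- take u in the intersection
  have hT : ({u | u ∈ U ∧ Y ∩ u ∈ P u} ∩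
      {u | u ∈ U ∧ ∀ α ∈ u, u ∈ {u' | u' ∈ U ∧ ∀ β ∈ u', pr α β ∈ u'}}) ∩
      {u | u ∈ U ∧ ∀ α ∈ u, u ∈ U \ {u' | u' ∈ U ∧ X α ∩ u' = Bseq α u'}} ∈ D :=
    hDint _ (hDint _ hS _ hCl) _ hN
  obtain ⟨u, ⟨⟨huU, hYPu⟩, _, hclosed⟩, _, hfail⟩ : Set.Nonempty _ :=
    Set.nonempty_iff_ne_empty.mpr (fun h => hDproper (h ▸ hT))
  have husub : u ⊆ Set.Iio lam.ord := (hU u huU).2.1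
  obtain ⟨hEsub, hEsurj⟩ := hEspec u huU
  obtain ⟨α, hαu, hEeq⟩ := hEsurj (Y ∩ u) hYPu
  have hαlt : α < lam.ord := husub hαu
  have hne : X α ∩ u ≠ Bseq α u := by
    intro heq
    exact (hfail α hαu).2 ⟨huU, heq⟩
  apply hne
  ext β
  constructor
  · rintro ⟨hβX, hβu⟩
    refine ⟨hβu, ?_⟩
    rw [hEeq]
    exact ⟨⟨α, hαlt, β, hβX, rfl⟩, (hclosed α hαu).2 β hβu⟩
  · rintro ⟨hβu, hprmem⟩
    rw [hEeq] at hprmem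
    obtain ⟨α', hα', β', hβ', heq⟩ := hprmem.1
    obtain ⟨h1, h2⟩ := hprinj α' β' α β hα' (hX1 α' hβ') hαlt (husub hβu) heq.symm
    refine ⟨?_, hβu⟩
    rw [h1, h2] at hβ'
    exact hβ'


end
end
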